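/- arXiv:math/0605419 — 6 statements merged into one kernel-verified Lean document; each statement's English description precedes it below -/
import Mathlib

section
/- Let X be a metric space with a bicombing Γ. If for all points x, y, z ∈ X there is a Γ-convex subset C_{x,y,z} of X that is affine (with its induced bicombing) and contains the three points x, y, z, then (X, Γ) is affine. -/
universe u

/-- A metric space bundled with its metric structure. -/
structure BundledMetricSpace : Type (u + 1) where
  carrier : Type u
  [str : MetricSpace carrier]

attribute [instance] BundledMetricSpace.str

/-- A real normed vector space bundled with its structure. -/
structure BundledNormedSpace : Type (u + 1) where
  carrier : Type u
  [grp : NormedAddCommGroup carrier]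
  [mod : NormedSpace ℝ carrier]

attribute [instance] BundledNormedSpace.grp BundledNormedSpace.mod

/-- `(pY, pZ)` realize `X` as the direct (ℓ²-) product of the metric spaces `Y` and `Z`:
the joint map is a surjection (hence, by the distance identity, an isometry onto
the product with the metric `d((y,z),(y',z')) = sqrt (d(y,y')² + d(z,z')²)`). -/
def IsProdDecomp {X Y Z : Type*} [MetricSpace X] [MetricSpace Y] [MetricSpace Z]
    (pY : X → Y) (pZ : X → Z) : Prop :=
  Function.Surjective (fun x => (pY x, pZ x)) ∧
    ∀ x x' : X, dist x x' ^ 2 = dist (pY x) (pY x') ^ 2 + dist (pZ x) (pZ x') ^ 2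

/-- Given the projection `pZ : X → Z` onto the complementary factor of a product
decomposition, `fiberThrough pZ x` is the fiber through `x` of the other factor,
i.e. `pZ⁻¹(pZ x)`. -/
def fiberThrough {X Z : Type*} (pZ : X → Z) (x : X) : Set X :=
  {x' : X | pZ x' = pZ x}

/-- A metric space is geodesic if any two points are joined by an isometrically
embedded interval. -/
def IsGeodesicSpace (X : Type*) [MetricSpace X] : Prop :=
  ∀ x y : X, ∃ γ : ℝ → X, γ 0 = x ∧ γ (dist x y) = y ∧
    ∀ s ∈ Set.Icc (0 : ℝ) (dist x y), ∀ t ∈ Set.Icc (0 : ℝ) (dist x y),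
      dist (γ s) (γ t) = |s - t|

/-- The affine rank of a metric space: the supremum of the topological dimensions
(= dimensions of the affine hulls) of affine spaces (= linearly convex subsets of
normed real vector spaces) admitting an isometric embedding into `X`. -/
noncomputable def affRank (X : Type*) [MetricSpace X] : ℕ∞ :=
  sSup {n : ℕ∞ | ∃ (V : BundledNormedSpace.{0}) (C : Set V.carrier) (f : C → X),
    FiniteDimensional ℝ V.carrier ∧ Convex ℝ C ∧ Isometry f ∧
    n = (Module.finrank ℝ (vectorSpan ℝ C) : ℕ∞)}

/-- A metric space is affine if it is isometric to a linearly convex subset of a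
real normed vector space. -/
def IsAffineMetricSpace (T : Type u) [MetricSpace T] : Prop :=
  ∃ (V : BundledNormedSpace.{u}) (C : Set V.carrier),
    Convex ℝ C ∧ Nonempty (T ≃ᵢ ↥C)

/-- A metric space is a finite-dimensional affine metric space if it is isometric to a
linearly convex subset of a finite-dimensional real normed vector space. -/
def IsFinDimAffine (T : Type*) [MetricSpace T] : Prop :=
  ∃ (V : BundledNormedSpace.{0}) (C : Set V.carrier),
    FiniteDimensional ℝ V.carrier ∧ Convex ℝ C ∧ Nonempty (T ≃ᵢ ↥C)

/-- A metric space is irreducible if in every direct product decomposition one of the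
factors is a single point (i.e. has at most one point). -/
def IrreducibleMS (Z : Type u) [MetricSpace Z] : Prop :=
  ∀ (W W' : Type u) [MetricSpace W] [MetricSpace W'] (q : Z → W) (q' : Z → W'),
    IsProdDecomp q q' → Subsingleton W ∨ Subsingleton W'

/-- `p` realizes `X` as the direct (ℓ²-) product of the finite family of metric
spaces `Y i`. -/
def IsMultiDecomp {X : Type u} [MetricSpace X] {n : ℕ} (Y : Fin n → BundledMetricSpace.{u})
    (p : ∀ i, X → (Y i).carrier) : Prop :=
  Function.Surjective (fun x => fun i => p i x) ∧
    ∀ x x' : X, dist x x' ^ 2 = ∑ i, dist (p i x) (p i x') ^ 2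

/-- The `Y i`-fiber through `x` of a multiple product decomposition: the set of points
having the same projections as `x` to all the other factors. -/
def mfiber {X : Type u} {n : ℕ} {Y : Fin n → BundledMetricSpace.{u}}
    (p : ∀ i, X → (Y i).carrier) (i : Fin n) (x : X) : Set X :=
  {x' : X | ∀ j, j ≠ i → p j x' = p j x}

/-- A decomposition `X = Y₀ × Y₁ × ⋯ × Yₙ` as in the de Rham decomposition theorem:
`Y₀` is a Euclidean space `ℝ^m` (possibly a point) and each `Y i`, `i ≥ 1`, is an
irreducible metric space with more than one point, not isometric to the real line. -/
def IsDeRhamDecomp {X : Type u} [MetricSpace X] {n : ℕ} (m : ℕ)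
    (Y : Fin (n + 1) → BundledMetricSpace.{u}) (p : ∀ i, X → (Y i).carrier) : Prop :=
  IsMultiDecomp Y p ∧ Nonempty ((Y 0).carrier ≃ᵢ EuclideanSpace ℝ (Fin m)) ∧
    ∀ i, i ≠ 0 → IrreducibleMS (Y i).carrier ∧ Nontrivial (Y i).carrier ∧
      IsEmpty ((Y i).carrier ≃ᵢ ℝ)

/-- A bicombing on a metric space `X`: to each pair of points `(x,y)` it assigns a
geodesic `t ↦ γ x y t`, `t ∈ [0, d(x,y)]`, parameterized by arclength, from `x` to `y`,
such that `γ x y` and `γ y x` coincide as sets, and for each point `m` on `γ x y`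
the geodesic `γ m y` is contained in `γ x y` (as sets). -/
structure Bicombing (X : Type u) [MetricSpace X] : Type u where
  γ : X → X → ℝ → X
  source : ∀ x y, γ x y 0 = x
  target : ∀ x y, γ x y (dist x y) = y
  isom : ∀ x y, ∀ s ∈ Set.Icc (0 : ℝ) (dist x y), ∀ t ∈ Set.Icc (0 : ℝ) (dist x y),
    dist (γ x y s) (γ x y t) = |s - t|
  symm : ∀ x y, γ x y '' Set.Icc (0 : ℝ) (dist x y) = γ y x '' Set.Icc (0 : ℝ) (dist y x)
  trans : ∀ x y, ∀ s ∈ Set.Icc (0 : ℝ) (dist x y),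
    γ (γ x y s) y '' Set.Icc (0 : ℝ) (dist (γ x y s) y) ⊆
      γ x y '' Set.Icc (0 : ℝ) (dist x y)

/-- A subset `C` is `Γ`-convex if it contains the special geodesic between any two of
its points. -/
def Bicombing.SegConvex {X : Type u} [MetricSpace X] (Γ : Bicombing X) (C : Set X) : Prop :=
  ∀ x ∈ C, ∀ y ∈ C, ∀ t ∈ Set.Icc (0 : ℝ) (dist x y), Γ.γ x y t ∈ C

/-- The subset `C`, equipped with the bicombing induced by `Γ`, is affine: there is a
map into a real normed vector space which is isometric on `C`, has linearly convex
image `f '' C`, and carries special geodesics between points of `C` to the linear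
geodesics between their images. -/
def Bicombing.IsAffineOn {X : Type u} [MetricSpace X] (Γ : Bicombing X) (C : Set X) :
    Prop :=
  ∃ (V : BundledNormedSpace.{u}) (f : X → V.carrier),
    (∀ x ∈ C, ∀ y ∈ C, dist (f x) (f y) = dist x y) ∧
    Convex ℝ (f '' C) ∧
    ∀ x ∈ C, ∀ y ∈ C, ∀ t ∈ Set.Icc (0 : ℝ) (dist x y),
      f (Γ.γ x y t) = f x + (t / dist x y) • (f y - f x)

/-- `(X, Γ)` is an affine space with bicombing: there is an isometric embedding of `X`
into a real normed vector space with linearly convex image carrying the special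
geodesics to linear geodesics. -/
def Bicombing.IsAffine {X : Type u} [MetricSpace X] (Γ : Bicombing X) : Prop :=
  ∃ (V : BundledNormedSpace.{u}) (f : X → V.carrier),
    Isometry f ∧ Convex ℝ (Set.range f) ∧
    ∀ x y : X, ∀ t ∈ Set.Icc (0 : ℝ) (dist x y),
      f (Γ.γ x y t) = f x + (t / dist x y) • (f y - f x)

/-- A bicombing of the subset `S` of a metric space `X`: geodesics, staying in `S`,
are assigned to pairs of points of `S`, with the same axioms as for a bicombing. -/
structure PartialBicombing (X : Type u) [MetricSpace X] (S : Set X) : Type u where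
  γ : X → X → ℝ → X
  mem : ∀ x ∈ S, ∀ y ∈ S, ∀ t ∈ Set.Icc (0 : ℝ) (dist x y), γ x y t ∈ S
  source : ∀ x ∈ S, ∀ y ∈ S, γ x y 0 = x
  target : ∀ x ∈ S, ∀ y ∈ S, γ x y (dist x y) = y
  isom : ∀ x ∈ S, ∀ y ∈ S, ∀ s ∈ Set.Icc (0 : ℝ) (dist x y),
    ∀ t ∈ Set.Icc (0 : ℝ) (dist x y), dist (γ x y s) (γ x y t) = |s - t|
  symm : ∀ x ∈ S, ∀ y ∈ S,
    γ x y '' Set.Icc (0 : ℝ) (dist x y) = γ y x '' Set.Icc (0 : ℝ) (dist y x)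
  trans : ∀ x ∈ S, ∀ y ∈ S, ∀ s ∈ Set.Icc (0 : ℝ) (dist x y),
    γ (γ x y s) y '' Set.Icc (0 : ℝ) (dist (γ x y s) y) ⊆
      γ x y '' Set.Icc (0 : ℝ) (dist x y)

/-- The bicombing `Γ'` of `S'` extends the bicombing `Γ` of `S`: `S ⊆ S'` and the
geodesics assigned by `Γ'` to pairs of points of `S` are those assigned by `Γ`. -/
def PartialBicombing.Extends {X : Type u} [MetricSpace X] {S S' : Set X}
    (Γ' : PartialBicombing X S') (Γ : PartialBicombing X S) : Prop :=
  S ⊆ S' ∧ ∀ x ∈ S, ∀ y ∈ S, ∀ t ∈ Set.Icc (0 : ℝ) (dist x y), Γ'.γ x y t = Γ.γ x y t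

/-- The subset `S`, with its bicombing `Γ`, is affine: there is a map into a real
normed vector space, isometric on `S`, with linearly convex image `f '' S`, carrying
the special geodesics to linear geodesics. -/
def PartialBicombing.IsAffine {X : Type u} [MetricSpace X] {S : Set X}
    (Γ : PartialBicombing X S) : Prop :=
  ∃ (V : BundledNormedSpace.{u}) (f : X → V.carrier),
    (∀ x ∈ S, ∀ y ∈ S, dist (f x) (f y) = dist x y) ∧
    Convex ℝ (f '' S) ∧
    ∀ x ∈ S, ∀ y ∈ S, ∀ t ∈ Set.Icc (0 : ℝ) (dist x y),
      f (Γ.γ x y t) = f x + (t / dist x y) • (f y - f x)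

section TPA

open Set

variable {X : Type u} [MetricSpace X]

/-- Convex-combination reparameterization of the bicombing geodesics:
`ccomb Γ x y t` is the point a fraction `t ∈ [0,1]` of the way from `x` to `y`. -/
noncomputable def ccomb (Γ : Bicombing X) (x y : X) (t : ℝ) : X :=
  Γ.γ x y (t * dist x y)

variable {Γ : Bicombing X}

lemma tmul_mem_Icc {t : ℝ} (ht : t ∈ Icc (0:ℝ) 1) (x y : X) :
    t * dist x y ∈ Icc (0:ℝ) (dist x y) :=
  ⟨mul_nonneg ht.1 dist_nonneg, by
    nlinarith [dist_nonneg (x := x) (y := y), ht.2, ht.1]⟩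

lemma ccomb_zero (x y : X) : ccomb Γ x y 0 = x := by
  simp [ccomb, Γ.source]

lemma ccomb_one (x y : X) : ccomb Γ x y 1 = y := by
  simpa [ccomb] using Γ.target x y

lemma ccomb_self (x : X) (t : ℝ) : ccomb Γ x x t = x := by
  simp [ccomb, Γ.source]

lemma dist_ccomb_same {s t : ℝ} (hs : s ∈ Icc (0:ℝ) 1) (ht : t ∈ Icc (0:ℝ) 1) (x y : X) :
    dist (ccomb Γ x y s) (ccomb Γ x y t) = |s - t| * dist x y := by
  have := Γ.isom x y _ (tmul_mem_Icc hs x y) _ (tmul_mem_Icc ht x y)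
  rw [ccomb, ccomb, this, ← sub_mul, abs_mul, abs_of_nonneg (dist_nonneg (x := x) (y := y))]

/-- The three-point hypothesis. -/
def ThreePoint (Γ : Bicombing X) : Prop :=
  ∀ x y z : X, ∃ C : Set X, Γ.SegConvex C ∧ Γ.IsAffineOn C ∧ x ∈ C ∧ y ∈ C ∧ z ∈ C

/-- An affine chart around three points. -/
structure Chart (Γ : Bicombing X) (x y z : X) : Type (u+1) where
  C : Set X
  V : BundledNormedSpace.{u}
  f : X → V.carrier
  mem : ∀ a ∈ C, ∀ b ∈ C, ∀ t ∈ Icc (0:ℝ) 1, ccomb Γ a b t ∈ C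
  iso : ∀ a ∈ C, ∀ b ∈ C, dist (f a) (f b) = dist a b
  aff : ∀ a ∈ C, ∀ b ∈ C, ∀ t ∈ Icc (0:ℝ) 1,
      f (ccomb Γ a b t) = (1 - t) • f a + t • f b
  hx : x ∈ C
  hy : y ∈ C
  hz : z ∈ C

lemma Chart.inj {x y z : X} (ch : Chart Γ x y z) {a b : X} (ha : a ∈ ch.C) (hb : b ∈ ch.C)
    (hfab : ch.f a = ch.f b) : a = b := by
  have := ch.iso a ha b hb
  rw [hfab, dist_self] at this
  exact (dist_eq_zero.mp this.symm)

lemma getChart (hyp : ThreePoint Γ) (x y z : X) : Nonempty (Chart Γ x y z) := by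
  obtain ⟨C, hconv, ⟨V, f, hiso, -, haff⟩, hx, hy, hz⟩ := hyp x y z
  refine ⟨⟨C, V, f, ?_, hiso, ?_, hx, hy, hz⟩⟩
  · intro a ha b hb t ht
    exact hconv a ha b hb _ (tmul_mem_Icc ht a b)
  · intro a ha b hb t ht
    rcases eq_or_ne (dist a b) 0 with hd | hd
    · have hab : a = b := dist_eq_zero.mp hd
      subst hab
      rw [ccomb_self]
      rw [← add_smul]
      norm_num
    · have := haff a ha b hb (t * dist a b) (tmul_mem_Icc ht a b)
      rw [ccomb, this, mul_div_assoc, div_self hd, mul_one]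
      rw [smul_sub, sub_smul, one_smul]
      abel

lemma ccomb_comm (hyp : ThreePoint Γ) {t : ℝ} (ht : t ∈ Icc (0:ℝ) 1) (x y : X) :
    ccomb Γ x y t = ccomb Γ y x (1 - t) := by
  obtain ⟨ch⟩ := getChart hyp x y y
  have ht' : 1 - t ∈ Icc (0:ℝ) 1 := ⟨by linarith [ht.2], by linarith [ht.1]⟩
  refine ch.inj (ch.mem x ch.hx y ch.hy t ht) (ch.mem y ch.hy x ch.hx _ ht') ?_
  rw [ch.aff x ch.hx y ch.hy t ht, ch.aff y ch.hy x ch.hx _ ht']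
  rw [show (1:ℝ) - (1 - t) = t by ring]
  abel

lemma dist_ccomb_right (hyp : ThreePoint Γ) {r : ℝ} (hr : r ∈ Icc (0:ℝ) 1) (x y z : X) :
    dist (ccomb Γ x z r) (ccomb Γ y z r) = (1 - r) * dist x y := by
  obtain ⟨ch⟩ := getChart hyp x y z
  rw [← ch.iso _ (ch.mem x ch.hx z ch.hz r hr) _ (ch.mem y ch.hy z ch.hz r hr),
    ch.aff x ch.hx z ch.hz r hr, ch.aff y ch.hy z ch.hz r hr]
  rw [dist_eq_norm]
  have : ((1-r) • ch.f x + r • ch.f z) - ((1-r) • ch.f y + r • ch.f z)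
      = (1-r) • (ch.f x - ch.f y) := by
    rw [smul_sub]; abel
  rw [this, norm_smul, Real.norm_eq_abs, abs_of_nonneg (by linarith [hr.2] : (0:ℝ) ≤ 1 - r),
    ← dist_eq_norm, ch.iso x ch.hx y ch.hy]

lemma dist_ccomb_left (hyp : ThreePoint Γ) {r : ℝ} (hr : r ∈ Icc (0:ℝ) 1) (x y z : X) :
    dist (ccomb Γ z x r) (ccomb Γ z y r) = r * dist x y := by
  obtain ⟨ch⟩ := getChart hyp x y z
  rw [← ch.iso _ (ch.mem z ch.hz x ch.hx r hr) _ (ch.mem z ch.hz y ch.hy r hr),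
    ch.aff z ch.hz x ch.hx r hr, ch.aff z ch.hz y ch.hy r hr]
  rw [dist_eq_norm]
  have : ((1-r) • ch.f z + r • ch.f x) - ((1-r) • ch.f z + r • ch.f y)
      = r • (ch.f x - ch.f y) := by
    rw [smul_sub]; abel
  rw [this, norm_smul, Real.norm_eq_abs, abs_of_nonneg hr.1,
    ← dist_eq_norm, ch.iso x ch.hx y ch.hy]

/-- The fundamental "peeling" identity used for evaluating barycentric words. -/
lemma threevar (hyp : ThreePoint Γ) {a b t : ℝ} (ha : a ∈ Icc (0:ℝ) 1)
    (hb : b ∈ Icc (0:ℝ) 1) (ht : t ∈ Icc (0:ℝ) 1) (x v w : X) :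
    ccomb Γ (ccomb Γ x v (1 - a)) (ccomb Γ x w (1 - b)) t
      = ccomb Γ x (ccomb Γ v w (t * (1 - b) / (1 - ((1 - t) * a + t * b))))
          (1 - ((1 - t) * a + t * b)) := by
  obtain ⟨ch⟩ := getChart hyp x v w
  set c : ℝ := (1 - t) * a + t * b with hc
  set s : ℝ := t * (1 - b) / (1 - c) with hs
  have hc01 : c ∈ Icc (0:ℝ) 1 := by
    constructor
    · have := mul_nonneg (by linarith [ht.2] : (0:ℝ) ≤ 1 - t) ha.1
      have := mul_nonneg ht.1 hb.1
      linarith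
    · nlinarith [ht.1, ht.2, ha.1, ha.2, hb.1, hb.2]
  have hkey : (1 - c) * s = t * (1 - b) := by
    rcases eq_or_ne (1 - c) 0 with h0 | h0
    · have hb0 : t * (1 - b) = 0 := by
        have h1 : (1 - t) * (1 - a) + t * (1 - b) = 1 - c := by ring
        have n1 : 0 ≤ (1 - t) * (1 - a) := mul_nonneg (by linarith [ht.2]) (by linarith [ha.2])
        have n2 : 0 ≤ t * (1 - b) := mul_nonneg ht.1 (by linarith [hb.2])
        nlinarith
      rw [h0, hb0, zero_mul]
    · rw [hs, mul_div_cancel₀ _ h0]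
  have hkey2 : (1 - c) * (1 - s) = (1 - t) * (1 - a) := by
    have : (1:ℝ) - c = (1 - t) * (1 - a) + t * (1 - b) := by ring
    nlinarith [hkey]
  have hs01 : s ∈ Icc (0:ℝ) 1 := by
    rcases eq_or_ne (1 - c) 0 with h0 | h0
    · have : s = 0 := by rw [hs, h0, div_zero]
      rw [this]; exact ⟨le_refl 0, zero_le_one⟩
    · have hcpos : 0 < 1 - c := lt_of_le_of_ne (by linarith [hc01.2]) (Ne.symm h0)
      constructor
      · exact div_nonneg (mul_nonneg ht.1 (by linarith [hb.2])) (le_of_lt hcpos)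
      · rw [hs, div_le_one hcpos]
        nlinarith [mul_nonneg (by linarith [ht.2] : (0:ℝ) ≤ 1 - t) (by linarith [ha.2] : (0:ℝ) ≤ 1 - a)]
  have ha' : 1 - a ∈ Icc (0:ℝ) 1 := ⟨by linarith [ha.2], by linarith [ha.1]⟩
  have hb' : 1 - b ∈ Icc (0:ℝ) 1 := ⟨by linarith [hb.2], by linarith [hb.1]⟩
  have hc' : 1 - c ∈ Icc (0:ℝ) 1 := ⟨by linarith [hc01.2], by linarith [hc01.1]⟩
  have m1 : ccomb Γ x v (1-a) ∈ ch.C := ch.mem x ch.hx v ch.hy _ ha'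
  have m2 : ccomb Γ x w (1-b) ∈ ch.C := ch.mem x ch.hx w ch.hz _ hb'
  have m3 : ccomb Γ v w s ∈ ch.C := ch.mem v ch.hy w ch.hz _ hs01
  refine ch.inj (ch.mem _ m1 _ m2 t ht) (ch.mem x ch.hx _ m3 _ hc') ?_
  rw [ch.aff _ m1 _ m2 t ht, ch.aff x ch.hx _ m3 _ hc',
    ch.aff x ch.hx v ch.hy _ ha', ch.aff x ch.hx w ch.hz _ hb',
    ch.aff v ch.hy w ch.hz _ hs01]
  rw [smul_add, smul_add, smul_add, smul_smul, smul_smul, smul_smul, smul_smul,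
    smul_smul, smul_smul]
  have e1 : (1 - (1 - c)) = c := by ring
  rw [e1]
  have e2 : (1 - c) * (1 - s) = (1-t) * (1-a) := hkey2
  have e3 : (1 - c) * s = t * (1-b) := hkey
  rw [e2, e3]
  have e4 : (1 - t) * (1 - (1 - a)) + t * (1 - (1 - b)) = c := by ring
  rw [show (1-t) * (1-(1-a)) = (1-t)*a by ring, show t * (1-(1-b)) = t * b by ring]
  rw [show c • ch.f x = ((1-t)*a) • ch.f x + (t*b) • ch.f x by rw [← add_smul]]
  abel


/-- Formal barycentric words over `n` variables. -/
inductive Wd (n : ℕ) : Type where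
  | leaf : Fin n → Wd n
  | node : Wd n → Wd n → ℝ → Wd n

namespace Wd

def valid {n : ℕ} : Wd n → Prop
  | leaf _ => True
  | node l r t => valid l ∧ valid r ∧ t ∈ Icc (0:ℝ) 1

def coeff {n : ℕ} : Wd n → Fin n → ℝ
  | leaf i, j => if j = i then 1 else 0
  | node l r t, j => (1 - t) * coeff l j + t * coeff r j

noncomputable def ev {n : ℕ} (Γ : Bicombing X) (pts : Fin n → X) : Wd n → X
  | leaf i => pts i
  | node l r t => ccomb Γ (ev Γ pts l) (ev Γ pts r) t

lemma coeff_nonneg {n : ℕ} {w : Wd n} (hw : valid w) (j : Fin n) : 0 ≤ coeff w j := by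
  induction w with
  | leaf i => by_cases h : j = i <;> simp [coeff, h]
  | node l r t ihl ihr =>
    obtain ⟨hl, hr, ht⟩ := hw
    exact add_nonneg (mul_nonneg (by linarith [ht.2]) (ihl hl))
      (mul_nonneg ht.1 (ihr hr))

lemma sum_coeff {n : ℕ} (w : Wd n) : ∑ j, coeff w j = 1 := by
  induction w with
  | leaf i => simp [coeff]
  | node l r t ihl ihr =>
    simp only [coeff, Finset.sum_add_distrib, ← Finset.mul_sum, ihl, ihr]
    ring

lemma coeff_le_one {n : ℕ} {w : Wd n} (hw : valid w) (j : Fin n) : coeff w j ≤ 1 := by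
  have h1 := sum_coeff w
  have h2 : ∑ i ∈ Finset.univ.erase j, coeff w i ≥ 0 :=
    Finset.sum_nonneg (fun i _ => coeff_nonneg hw i)
  have h3 : coeff w j + ∑ i ∈ Finset.univ.erase j, coeff w i = 1 := by
    rw [← h1, Finset.add_sum_erase _ _ (Finset.mem_univ j)]
  linarith

lemma ev_fin1 {Γ : Bicombing X} (pts : Fin 1 → X) (w : Wd 1) : ev Γ pts w = pts 0 := by
  induction w with
  | leaf i => rw [ev, Subsingleton.elim i 0]
  | node l r t ihl ihr => rw [ev, ihl, ihr, ccomb_self]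

noncomputable def peelW {n : ℕ} : Wd (n + 2) → Wd (n + 1)
  | leaf i => Fin.cases (leaf 0) (fun j => leaf j) i
  | node l r t =>
      node (peelW l) (peelW r)
        (t * (1 - coeff r 0) / (1 - ((1 - t) * coeff l 0 + t * coeff r 0)))

lemma peel_valid {n : ℕ} {w : Wd (n + 2)} (hw : valid w) : valid (peelW w) := by
  induction w with
  | leaf i =>
    rcases i.eq_zero_or_eq_succ with h | ⟨j, h⟩ <;> subst h <;> simp [peelW, valid]
  | node l r t ihl ihr =>
    obtain ⟨hl, hr, ht⟩ := hw
    set cl := coeff l 0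
    set cr := coeff r 0
    have hcl : cl ∈ Icc (0:ℝ) 1 := ⟨coeff_nonneg hl 0, coeff_le_one hl 0⟩
    have hcr : cr ∈ Icc (0:ℝ) 1 := ⟨coeff_nonneg hr 0, coeff_le_one hr 0⟩
    refine ⟨ihl hl, ihr hr, ?_, ?_⟩
    · rcases eq_or_ne (1 - ((1-t)*cl + t*cr)) 0 with h0 | h0
      · rw [h0, div_zero]
      · have hpos : 0 < 1 - ((1-t)*cl + t*cr) := by
          rcases lt_or_eq_of_le (by nlinarith [ht.1, ht.2, hcl.1, hcl.2, hcr.1, hcr.2] :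
            (1-t)*cl + t*cr ≤ 1) with h | h
          · linarith
          · exact absurd (by linarith) h0
        exact div_nonneg (mul_nonneg ht.1 (by linarith [hcr.2])) (le_of_lt hpos)
    · rcases eq_or_ne (1 - ((1-t)*cl + t*cr)) 0 with h0 | h0
      · rw [h0, div_zero]; exact zero_le_one
      · have hpos : 0 < 1 - ((1-t)*cl + t*cr) := by
          rcases lt_or_eq_of_le (by nlinarith [ht.1, ht.2, hcl.1, hcl.2, hcr.1, hcr.2] :
            (1-t)*cl + t*cr ≤ 1) with h | h
          · linarith
          · exact absurd (by linarith) h0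
        rw [div_le_one hpos]
        nlinarith [mul_nonneg (by linarith [ht.2] : (0:ℝ) ≤ 1 - t) (by linarith [hcl.2] : (0:ℝ) ≤ 1 - cl)]

lemma peel_key {n : ℕ} {l r : Wd (n+2)} {t : ℝ} (hl : valid l) (hr : valid r)
    (ht : t ∈ Icc (0:ℝ) 1) :
    (1 - ((1 - t) * coeff l 0 + t * coeff r 0)) *
      (t * (1 - coeff r 0) / (1 - ((1 - t) * coeff l 0 + t * coeff r 0)))
      = t * (1 - coeff r 0) := by
  set cl := coeff l 0
  set cr := coeff r 0
  have hcl : cl ∈ Icc (0:ℝ) 1 := ⟨coeff_nonneg hl 0, coeff_le_one hl 0⟩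
  have hcr : cr ∈ Icc (0:ℝ) 1 := ⟨coeff_nonneg hr 0, coeff_le_one hr 0⟩
  rcases eq_or_ne (1 - ((1-t)*cl + t*cr)) 0 with h0 | h0
  · rw [h0, zero_mul]
    have n1 : 0 ≤ (1-t) * (1-cl) := mul_nonneg (by linarith [ht.2]) (by linarith [hcl.2])
    have n2 : 0 ≤ t * (1-cr) := mul_nonneg ht.1 (by linarith [hcr.2])
    have : (1-t)*(1-cl) + t*(1-cr) = 1 - ((1-t)*cl + t*cr) := by ring
    nlinarith
  · rw [mul_div_cancel₀ _ h0]

lemma peel_coeff {n : ℕ} {w : Wd (n + 2)} (hw : valid w) (j : Fin (n + 1)) :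
    (1 - coeff w 0) * coeff (peelW w) j = coeff w j.succ := by
  induction w with
  | leaf i =>
    rcases i.eq_zero_or_eq_succ with h | ⟨i', h⟩ <;> subst h
    · simp [peelW, coeff, Fin.succ_ne_zero]
    · simp only [peelW, Fin.cases_succ, coeff]
      rw [if_neg (Fin.succ_ne_zero i').symm]
      simp only [sub_zero, one_mul]
      by_cases h : j = i'
      · subst h; simp
      · rw [if_neg h, if_neg (fun hc => h (Fin.succ_inj.mp hc))]
  | node l r t ihl ihr =>
    obtain ⟨hl, hr, ht⟩ := hw
    have hkey := peel_key hl hr ht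
    have hkey2 : (1 - ((1-t) * coeff l 0 + t * coeff r 0)) *
        (1 - (t * (1 - coeff r 0) / (1 - ((1 - t) * coeff l 0 + t * coeff r 0))))
        = (1-t) * (1 - coeff l 0) := by
      rw [mul_sub, hkey]; ring
    have el := ihl hl
    have er := ihr hr
    show (1 - ((1-t) * coeff l 0 + t * coeff r 0)) *
      ((1 - _) * coeff (peelW l) j + _ * coeff (peelW r) j) = _
    rw [mul_add, ← mul_assoc, ← mul_assoc, hkey2, hkey]
    rw [mul_assoc, mul_assoc, el, er]
    show _ = (1-t) * coeff l j.succ + t * coeff r j.succ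
    ring

lemma peel_ev {Γ : Bicombing X} (hyp : ThreePoint Γ) {n : ℕ} {w : Wd (n + 2)}
    (hw : valid w) (x₀ : X) (pts : Fin (n + 1) → X) :
    ev Γ (Fin.cons x₀ pts) w = ccomb Γ x₀ (ev Γ pts (peelW w)) (1 - coeff w 0) := by
  induction w with
  | leaf i =>
    rcases i.eq_zero_or_eq_succ with h | ⟨i', h⟩ <;> subst h
    · rw [show coeff (leaf (0 : Fin (n+2))) 0 = 1 by simp [coeff], sub_self, ccomb_zero]
      simp [ev]
    · simp only [ev, Fin.cons_succ, peelW, Fin.cases_succ, coeff]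
      rw [if_neg (Fin.succ_ne_zero i').symm, sub_zero, ccomb_one]
  | node l r t ihl ihr =>
    obtain ⟨hl, hr, ht⟩ := hw
    have hcl : coeff l 0 ∈ Icc (0:ℝ) 1 := ⟨coeff_nonneg hl 0, coeff_le_one hl 0⟩
    have hcr : coeff r 0 ∈ Icc (0:ℝ) 1 := ⟨coeff_nonneg hr 0, coeff_le_one hr 0⟩
    show ccomb Γ (ev Γ (Fin.cons x₀ pts) l) (ev Γ (Fin.cons x₀ pts) r) t = _
    rw [ihl hl, ihr hr]
    rw [threevar hyp hcl hcr ht]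
    rfl

theorem wordeq {Γ : Bicombing X} (hyp : ThreePoint Γ) {n : ℕ} (pts : Fin (n + 1) → X)
    {w₁ w₂ : Wd (n + 1)} (h1 : valid w₁) (h2 : valid w₂)
    (hco : coeff w₁ = coeff w₂) : ev Γ pts w₁ = ev Γ pts w₂ := by
  induction n with
  | zero => rw [ev_fin1, ev_fin1]
  | succ n ih =>
    have hpts : pts = Fin.cons (pts 0) (Fin.tail pts) := (Fin.cons_self_tail pts).symm
    rw [hpts, peel_ev hyp h1, peel_ev hyp h2, hco]
    rcases eq_or_ne (coeff w₂ 0) 1 with h0 | h0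
    · rw [h0, sub_self, ccomb_zero, ccomb_zero]
    · have : ev Γ (Fin.tail pts) (peelW w₁) = ev Γ (Fin.tail pts) (peelW w₂) := by
        refine ih _ (peel_valid h1) (peel_valid h2) ?_
        funext j
        have e1 := peel_coeff h1 j
        have e2 := peel_coeff h2 j
        rw [hco] at e1
        have := e1.trans e2.symm
        exact mul_left_cancel₀ (sub_ne_zero.mpr (Ne.symm h0)) this
      rw [this]

end Wd

/-! ### The pair space -/

lemma half01 : (1/2 : ℝ) ∈ Icc (0:ℝ) 1 := by norm_num

lemma one_sub_mem {t : ℝ} (ht : t ∈ Icc (0:ℝ) 1) : 1 - t ∈ Icc (0:ℝ) 1 :=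
  ⟨by linarith [ht.2], by linarith [ht.1]⟩

/-- `pS c P` represents the vector `c • P` (`P = (x,y)` representing `x - y`). -/
noncomputable def pS (Γ : Bicombing X) (c : ℝ) (P : X × X) : X × X :=
  (ccomb Γ P.2 P.1 c, P.2)

/-- `pComb t P Q` represents `t • P + (1-t) • Q`. -/
noncomputable def pComb (Γ : Bicombing X) (t : ℝ) (P Q : X × X) : X × X :=
  (ccomb Γ P.1 Q.1 (1 - t), ccomb Γ P.2 Q.2 (1 - t))

/-- `pPhi P Q` represents `‖P - Q‖`. -/
noncomputable def pPhi (Γ : Bicombing X) (P Q : X × X) : ℝ :=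
  2 * dist (ccomb Γ P.1 Q.2 (1/2)) (ccomb Γ P.2 Q.1 (1/2))

lemma pPhi_nonneg (P Q : X × X) : 0 ≤ pPhi Γ P Q :=
  mul_nonneg (by norm_num) dist_nonneg

lemma pPhi_comm (hyp : ThreePoint Γ) (P Q : X × X) : pPhi Γ P Q = pPhi Γ Q P := by
  unfold pPhi
  rw [ccomb_comm hyp half01 Q.1 P.2, ccomb_comm hyp half01 Q.2 P.1]
  norm_num [dist_comm]

lemma pPhi_self (hyp : ThreePoint Γ) (P : X × X) : pPhi Γ P P = 0 := by
  unfold pPhi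
  rw [ccomb_comm hyp half01 P.2 P.1]
  norm_num

lemma pPhi_swap (P Q : X × X) : pPhi Γ P.swap Q.swap = pPhi Γ P Q := by
  unfold pPhi
  rw [dist_comm]
  rfl

lemma pPhi_null (hyp : ThreePoint Γ) (z : X) (W : X × X) :
    pPhi Γ (z, z) W = dist W.1 W.2 := by
  unfold pPhi
  rw [dist_ccomb_left hyp half01, dist_comm W.2 W.1]
  ring

/-- The quadrilateral inequality. -/
lemma four_ineq (hyp : ThreePoint Γ) (a b c d : X) :
    dist a b ≤ dist c d + 2 * dist (ccomb Γ a d (1/2)) (ccomb Γ b c (1/2)) := by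
  have e1 : dist (ccomb Γ a c (1/2)) (ccomb Γ b c (1/2)) = (1 - 1/2) * dist a b :=
    dist_ccomb_right hyp half01 a b c
  have e2 : dist (ccomb Γ a c (1/2)) (ccomb Γ a d (1/2)) = (1/2) * dist c d :=
    dist_ccomb_left hyp half01 c d a
  have tri := dist_triangle (ccomb Γ a c (1/2)) (ccomb Γ a d (1/2)) (ccomb Γ b c (1/2))
  rw [e2] at tri
  have : (1 - 1/2 : ℝ) * dist a b ≤ 1/2 * dist c d + dist (ccomb Γ a d (1/2)) (ccomb Γ b c (1/2)) := by
    rw [← e1]; exact tri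
  linarith

/-- General interchange identity (instance of `wordeq`). -/
lemma inter (hyp : ThreePoint Γ) {s t : ℝ} (hs : s ∈ Icc (0:ℝ) 1) (ht : t ∈ Icc (0:ℝ) 1)
    (a b c d : X) :
    ccomb Γ (ccomb Γ a b s) (ccomb Γ c d s) t
      = ccomb Γ (ccomb Γ a c t) (ccomb Γ b d t) s := by
  have := Wd.wordeq (n := 3) hyp ![a, b, c, d]
    (w₁ := Wd.node (Wd.node (Wd.leaf 0) (Wd.leaf 1) s) (Wd.node (Wd.leaf 2) (Wd.leaf 3) s) t)
    (w₂ := Wd.node (Wd.node (Wd.leaf 0) (Wd.leaf 2) t) (Wd.node (Wd.leaf 1) (Wd.leaf 3) t) s)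
    (by simp only [Wd.valid, true_and]; exact ⟨hs, hs, ht⟩)
    (by simp only [Wd.valid, true_and]; exact ⟨ht, ht, hs⟩)
    (by
      funext j
      fin_cases j <;> simp [Wd.coeff] <;> ring)
  simpa [Wd.ev, Matrix.cons_val_zero, Matrix.cons_val_one] using this

/-- Conical inequality. -/
lemma dist_comb_le (hyp : ThreePoint Γ) {t : ℝ} (ht : t ∈ Icc (0:ℝ) 1) (a b c d : X) :
    dist (ccomb Γ a b t) (ccomb Γ c d t) ≤ (1 - t) * dist a c + t * dist b d := by
  have e1 : dist (ccomb Γ a b t) (ccomb Γ a d t) = t * dist b d := dist_ccomb_left hyp ht b d a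
  have e2 : dist (ccomb Γ a d t) (ccomb Γ c d t) = (1 - t) * dist a c :=
    dist_ccomb_right hyp ht a c d
  have tri := dist_triangle (ccomb Γ a b t) (ccomb Γ a d t) (ccomb Γ c d t)
  rw [e1, e2] at tri
  linarith

/-- Triangle inequality for `pPhi`. -/
lemma pPhi_triangle (hyp : ThreePoint Γ) (P Q R : X × X) :
    pPhi Γ P R ≤ pPhi Γ P Q + pPhi Γ Q R := by
  obtain ⟨x, y⟩ := P; obtain ⟨z, w⟩ := Q; obtain ⟨p, q⟩ := R
  have J4 := four_ineq hyp (ccomb Γ x q (1/2)) (ccomb Γ y p (1/2))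
    (ccomb Γ z q (1/2)) (ccomb Γ w p (1/2))
  have med1 : ccomb Γ (ccomb Γ x q (1/2)) (ccomb Γ w p (1/2)) (1/2)
      = ccomb Γ (ccomb Γ x w (1/2)) (ccomb Γ q p (1/2)) (1/2) := inter hyp half01 half01 x q w p
  have med2 : ccomb Γ (ccomb Γ y p (1/2)) (ccomb Γ z q (1/2)) (1/2)
      = ccomb Γ (ccomb Γ y z (1/2)) (ccomb Γ p q (1/2)) (1/2) := inter hyp half01 half01 y p z q
  have hqp : ccomb Γ q p (1/2) = ccomb Γ p q (1/2) := by
    rw [ccomb_comm hyp half01 q p]; norm_num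
  rw [med1, med2, hqp] at J4
  have e3 : dist (ccomb Γ (ccomb Γ x w (1/2)) (ccomb Γ p q (1/2)) (1/2))
      (ccomb Γ (ccomb Γ y z (1/2)) (ccomb Γ p q (1/2)) (1/2))
      = (1 - 1/2) * dist (ccomb Γ x w (1/2)) (ccomb Γ y z (1/2)) :=
    dist_ccomb_right hyp half01 _ _ _
  rw [e3] at J4
  unfold pPhi
  simp only []
  have : dist (ccomb Γ z q (1/2)) (ccomb Γ w p (1/2)) = dist (ccomb Γ w p (1/2)) (ccomb Γ z q (1/2)) := dist_comm _ _
  linarith [J4, this.le, this.ge]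

/-- Scaling identity for `pPhi`. -/
lemma pPhi_scale (hyp : ThreePoint Γ) {c : ℝ} (hc : c ∈ Icc (0:ℝ) 1) (P Q : X × X) :
    pPhi Γ (pS Γ c P) (pS Γ c Q) = c * pPhi Γ P Q := by
  obtain ⟨x, y⟩ := P; obtain ⟨z, w⟩ := Q
  unfold pPhi pS
  simp only []
  have id1 : ccomb Γ (ccomb Γ y x c) w (1/2)
      = ccomb Γ (ccomb Γ y w (1/2)) (ccomb Γ x w (1/2)) c := by
    conv_lhs => rw [show w = ccomb Γ w w c from (ccomb_self w c).symm]
    exact inter hyp hc half01 y x w w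
  have id2 : ccomb Γ y (ccomb Γ w z c) (1/2)
      = ccomb Γ (ccomb Γ y w (1/2)) (ccomb Γ y z (1/2)) c := by
    conv_lhs => rw [show y = ccomb Γ y y c from (ccomb_self y c).symm]
    exact inter hyp hc half01 y y w z
  rw [id1, id2, dist_ccomb_left hyp hc]
  ring

lemma pS_one (hyp : ThreePoint Γ) (P : X × X) : pS Γ 1 P = P := by
  unfold pS; rw [ccomb_one]

lemma pS_pS (hyp : ThreePoint Γ) {c c' : ℝ} (hc : c ∈ Icc (0:ℝ) 1) (hc' : c' ∈ Icc (0:ℝ) 1)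
    (P : X × X) : pS Γ c (pS Γ c' P) = pS Γ (c * c') P := by
  unfold pS
  simp only []
  congr 1
  have := Wd.wordeq (n := 1) hyp ![P.2, P.1]
    (w₁ := Wd.node (Wd.leaf 0) (Wd.node (Wd.leaf 0) (Wd.leaf 1) c') c)
    (w₂ := Wd.node (Wd.leaf 0) (Wd.leaf 1) (c * c'))
    (by simp only [Wd.valid, true_and]; exact ⟨hc', hc⟩)
    (by simp only [Wd.valid, true_and]
        exact Set.mem_Icc.mpr ⟨mul_nonneg hc.1 hc'.1, mul_le_one₀ hc.2 hc'.1 hc'.2⟩)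
    (by funext j; fin_cases j <;> simp [Wd.coeff] <;> ring)
  simpa [Wd.ev] using this

/-- `pComb` comparison with equal parameter. -/
lemma pPhi_comb_le (hyp : ThreePoint Γ) {t : ℝ} (ht : t ∈ Icc (0:ℝ) 1) (P Q P' Q' : X × X) :
    pPhi Γ (pComb Γ t P Q) (pComb Γ t P' Q') ≤ t * pPhi Γ P P' + (1 - t) * pPhi Γ Q Q' := by
  obtain ⟨p₁, p₂⟩ := P; obtain ⟨q₁, q₂⟩ := Q; obtain ⟨a₁, a₂⟩ := P'; obtain ⟨b₁, b₂⟩ := Q'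
  unfold pPhi pComb
  simp only []
  have ht' := one_sub_mem ht
  have id1 : ccomb Γ (ccomb Γ p₁ q₁ (1-t)) (ccomb Γ a₂ b₂ (1-t)) (1/2)
      = ccomb Γ (ccomb Γ p₁ a₂ (1/2)) (ccomb Γ q₁ b₂ (1/2)) (1-t) := inter hyp ht' half01 _ _ _ _
  have id2 : ccomb Γ (ccomb Γ p₂ q₂ (1-t)) (ccomb Γ a₁ b₁ (1-t)) (1/2)
      = ccomb Γ (ccomb Γ p₂ a₁ (1/2)) (ccomb Γ q₂ b₁ (1/2)) (1-t) := inter hyp ht' half01 _ _ _ _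
  rw [id1, id2]
  have := dist_comb_le hyp ht' (ccomb Γ p₁ a₂ (1/2)) (ccomb Γ q₁ b₂ (1/2))
    (ccomb Γ p₂ a₁ (1/2)) (ccomb Γ q₂ b₁ (1/2))
  linarith [this]

lemma div_mem_Icc {x y : ℝ} (hx : 0 ≤ x) (hy : 0 ≤ y) : x / (x + y) ∈ Icc (0:ℝ) 1 := by
  rcases eq_or_lt_of_le (add_nonneg hx hy) with h0 | hpos
  · rw [← h0, div_zero]; exact ⟨le_refl 0, zero_le_one⟩
  · exact ⟨div_nonneg hx (by linarith), (div_le_one hpos).mpr (by linarith)⟩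

/-- Renormalization identity: `e • (g • P + (1-g) • R)` and `u • (w • P) + (1-u) • (½ • R)`
represent the same vector, hence are `pPhi`-equivalent. -/
lemma equiv4 (hyp : ThreePoint Γ) {e g u w : ℝ} (he : e ∈ Icc (0:ℝ) 1) (hg : g ∈ Icc (0:ℝ) 1)
    (hu : u ∈ Icc (0:ℝ) 1) (hw : w ∈ Icc (0:ℝ) 1)
    (h₁ : e * g = u * w) (h₂ : e * (1 - g) = (1 - u) / 2) (P R : X × X) :
    pPhi Γ (pS Γ e (pComb Γ g P R)) (pComb Γ u (pS Γ w P) (pS Γ (1/2) R)) = 0 := by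
  obtain ⟨p₁, p₂⟩ := P; obtain ⟨r₁, r₂⟩ := R
  unfold pPhi pS pComb
  simp only []
  rw [mul_eq_zero]
  right
  rw [dist_eq_zero]
  have hg' := one_sub_mem hg
  have hu' := one_sub_mem hu
  exact Wd.wordeq (n := 3) hyp ![p₁, p₂, r₁, r₂]
    (w₁ := Wd.node
      (Wd.node (Wd.node (Wd.leaf 1) (Wd.leaf 3) (1-g)) (Wd.node (Wd.leaf 0) (Wd.leaf 2) (1-g)) e)
      (Wd.node (Wd.leaf 1) (Wd.leaf 3) (1-u)) (1/2))
    (w₂ := Wd.node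
      (Wd.node (Wd.leaf 1) (Wd.leaf 3) (1-g))
      (Wd.node (Wd.node (Wd.leaf 1) (Wd.leaf 0) w) (Wd.node (Wd.leaf 3) (Wd.leaf 2) (1/2)) (1-u))
      (1/2))
    (by simp only [Wd.valid, true_and]; exact ⟨⟨hg', hg', he⟩, hu', half01⟩)
    (by simp only [Wd.valid, true_and]; exact ⟨hg', ⟨hw, half01, hu'⟩, half01⟩)
    (by
      funext j
      fin_cases j <;> simp [Wd.coeff] <;>
        first
          | linear_combination h₂/2
          | linear_combination -h₁/2
          | linear_combination -h₂/2
          | linear_combination h₂/2 - h₁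
          | linear_combination h₂ - h₁/2
          | linear_combination h₂
          | linear_combination h₁
          | linear_combination h₁/2
          | linear_combination h₂ - h₁
          | linear_combination h₂*2 - h₁
          | linear_combination h₁ + h₂
          | linear_combination h₁/2 + h₂/2
          | ring)

/-! ### The cone of scaled difference pairs -/

/-- A scaled pair, representing the vector `c • (P.1 - P.2)`. -/
structure Pre (X : Type u) : Type u where
  c : NNReal
  P : X × X

variable (Γ) in
/-- The pseudodistance on scaled pairs. -/
noncomputable def Psi (a b : Pre X) : ℝ :=
  (((a.c : ℝ)) + (b.c : ℝ)) *
    pPhi Γ (pS Γ ((a.c : ℝ) / ((a.c : ℝ) + (b.c : ℝ))) a.P)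
           (pS Γ ((b.c : ℝ) / ((a.c : ℝ) + (b.c : ℝ))) b.P)

lemma Psi_nonneg (a b : Pre X) : 0 ≤ Psi Γ a b :=
  mul_nonneg (add_nonneg a.c.coe_nonneg b.c.coe_nonneg) (pPhi_nonneg _ _)

lemma Psi_comm (hyp : ThreePoint Γ) (a b : Pre X) : Psi Γ a b = Psi Γ b a := by
  unfold Psi
  rw [pPhi_comm hyp, add_comm ((a.c:ℝ)) (b.c:ℝ)]

lemma Psi_zero_scale {a b : Pre X} (h : ((a.c : ℝ)) + (b.c : ℝ) = 0) : Psi Γ a b = 0 := by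
  unfold Psi; rw [h, zero_mul]

lemma Psi_self (hyp : ThreePoint Γ) (a : Pre X) : Psi Γ a a = 0 := by
  unfold Psi; rw [pPhi_self hyp, mul_zero]

lemma Psi_eq_of_eq (hyp : ThreePoint Γ) {a b : Pre X} (h : a = b) : Psi Γ a b = 0 := by
  rw [h]; exact Psi_self hyp b

/-- Renormalization of `Psi` to any larger scale. -/
lemma Psi_scale (hyp : ThreePoint Γ) (a b : Pre X) {σ : ℝ} (hσ : (a.c : ℝ) + (b.c : ℝ) ≤ σ)
    (hpos : 0 < σ) :
    Psi Γ a b = σ * pPhi Γ (pS Γ ((a.c : ℝ)/σ) a.P) (pS Γ ((b.c : ℝ)/σ) b.P) := by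
  rcases eq_or_lt_of_le (add_nonneg a.c.coe_nonneg b.c.coe_nonneg : (0:ℝ) ≤ (a.c:ℝ) + (b.c:ℝ)) with h0 | hlt
  · have ha : (a.c : ℝ) = 0 := by have := a.c.coe_nonneg; have := b.c.coe_nonneg; linarith
    have hb : (b.c : ℝ) = 0 := by have := a.c.coe_nonneg; have := b.c.coe_nonneg; linarith
    rw [Psi_zero_scale (h0.symm), ha, hb]
    rw [show (0:ℝ)/σ = 0 from zero_div σ]
    unfold pS
    rw [ccomb_zero, ccomb_zero]
    rw [pPhi_null hyp]
    simp
  · set s : ℝ := (a.c : ℝ) + (b.c : ℝ)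
    have hs0 : s ≠ 0 := ne_of_gt hlt
    have hmem : s / σ ∈ Icc (0:ℝ) 1 :=
      ⟨div_nonneg (le_of_lt hlt) (le_of_lt hpos), (div_le_one hpos).mpr hσ⟩
    have hma : (a.c : ℝ) / s ∈ Icc (0:ℝ) 1 := by
      have := div_mem_Icc a.c.coe_nonneg b.c.coe_nonneg; exact this
    have hmb : (b.c : ℝ) / s ∈ Icc (0:ℝ) 1 := by
      have := div_mem_Icc b.c.coe_nonneg a.c.coe_nonneg
      rwa [add_comm] at this
    have ea : (a.c : ℝ) / σ = (s / σ) * ((a.c : ℝ) / s) := by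
      field_simp
    have eb : (b.c : ℝ) / σ = (s / σ) * ((b.c : ℝ) / s) := by
      field_simp
    rw [ea, eb, ← pS_pS hyp hmem hma, ← pS_pS hyp hmem hmb, pPhi_scale hyp hmem]
    unfold Psi
    field_simp
    rfl

lemma Psi_triangle (hyp : ThreePoint Γ) (a b c : Pre X) :
    Psi Γ a c ≤ Psi Γ a b + Psi Γ b c := by
  set σ : ℝ := (a.c : ℝ) + (b.c : ℝ) + (c.c : ℝ)
  rcases eq_or_lt_of_le (by positivity : (0:ℝ) ≤ σ) with h0 | hpos
  · have hab : Psi Γ a b = 0 := Psi_zero_scale (by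
      have := a.c.coe_nonneg; have := b.c.coe_nonneg; have := c.c.coe_nonneg; simp only [σ] at h0; linarith)
    have hbc : Psi Γ b c = 0 := Psi_zero_scale (by
      have := a.c.coe_nonneg; have := b.c.coe_nonneg; have := c.c.coe_nonneg; simp only [σ] at h0; linarith)
    have hac : Psi Γ a c = 0 := Psi_zero_scale (by
      have := a.c.coe_nonneg; have := b.c.coe_nonneg; have := c.c.coe_nonneg; simp only [σ] at h0; linarith)
    rw [hab, hbc, hac]; norm_num
  · have hb2 := b.c.coe_nonneg; have ha2 := a.c.coe_nonneg; have hc2 := c.c.coe_nonneg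
    rw [Psi_scale hyp a c (by simp only [σ]; linarith) hpos,
      Psi_scale hyp a b (by simp only [σ]; linarith) hpos,
      Psi_scale hyp b c (by simp only [σ]; linarith) hpos]
    rw [← mul_add]
    exact mul_le_mul_of_nonneg_left (pPhi_triangle hyp _ _ _) (le_of_lt hpos)

/-- The setoid of scaled pairs representing equal vectors. -/
noncomputable def preSetoid (Γ : Bicombing X) (hyp : ThreePoint Γ) : Setoid (Pre X) where
  r a b := Psi Γ a b = 0
  iseqv := by
    refine ⟨fun a => Psi_self hyp a, fun {a b} h => by rwa [Psi_comm hyp], fun {a b c} h1 h2 => ?_⟩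
    have := Psi_triangle hyp a b c
    have := Psi_nonneg (Γ := Γ) a c
    linarith

/-! ### Operations on scaled pairs -/

variable (Γ) in
noncomputable def addPre (a b : Pre X) : Pre X :=
  ⟨a.c + b.c, pComb Γ ((a.c : ℝ) / ((a.c : ℝ) + (b.c : ℝ))) a.P b.P⟩

def negPre (a : Pre X) : Pre X := ⟨a.c, a.P.swap⟩

noncomputable def smulPre (r : ℝ) (a : Pre X) : Pre X :=
  if 0 ≤ r then ⟨r.toNNReal * a.c, a.P⟩ else ⟨(-r).toNNReal * a.c, a.P.swap⟩

lemma pComb_zero (P Q : X × X) : pComb Γ 0 P Q = Q := by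
  unfold pComb; rw [sub_zero, ccomb_one, ccomb_one]

lemma pComb_one (P Q : X × X) : pComb Γ 1 P Q = P := by
  unfold pComb; rw [sub_self, ccomb_zero, ccomb_zero]

lemma pComb_self (t : ℝ) (P : X × X) : pComb Γ t P P = P := by
  unfold pComb; rw [ccomb_self, ccomb_self]

lemma pS_zero (P : X × X) : pS Γ 0 P = (P.2, P.2) := by
  unfold pS; rw [ccomb_zero]

lemma pComb_comm (hyp : ThreePoint Γ) {t : ℝ} (ht : t ∈ Icc (0:ℝ) 1) (P Q : X × X) :
    pComb Γ t P Q = pComb Γ (1 - t) Q P := by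
  unfold pComb
  rw [ccomb_comm hyp (one_sub_mem ht) P.1 Q.1, ccomb_comm hyp (one_sub_mem ht) P.2 Q.2]

lemma pComb_swap (t : ℝ) (P Q : X × X) :
    (pComb Γ t P Q).swap = pComb Γ t P.swap Q.swap := rfl

lemma Psi_left_zero (hyp : ThreePoint Γ) {x : Pre X} (hx : (x.c : ℝ) = 0) (y : Pre X) :
    Psi Γ x y = (y.c : ℝ) * dist y.P.1 y.P.2 := by
  unfold Psi
  rw [hx, zero_add, zero_div]
  rcases eq_or_ne ((y.c : ℝ)) 0 with h0 | h0
  · rw [h0]; ring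
  · rw [div_self h0, pS_one hyp, pS_zero]
    rw [show (x.P.2, x.P.2) = ((x.P.2 : X), (x.P.2 : X)) from rfl, pPhi_null hyp]

lemma Psi_right_zero (hyp : ThreePoint Γ) (x : Pre X) {y : Pre X} (hy : (y.c : ℝ) = 0) :
    Psi Γ x y = (x.c : ℝ) * dist x.P.1 x.P.2 := by
  rw [Psi_comm hyp]; exact Psi_left_zero hyp hy x

/-- Zero representatives: `Psi` to the zero pair computes the norm. -/
lemma Psi_norm (hyp : ThreePoint Γ) (a : Pre X) (z : X) :
    Psi Γ a ⟨0, (z, z)⟩ = (a.c : ℝ) * dist a.P.1 a.P.2 :=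
  Psi_right_zero hyp a (by simp)

lemma pPhi_congr (hyp : ThreePoint Γ) {A A' B B' : X × X} (hA : pPhi Γ A A' = 0)
    (hB : pPhi Γ B B' = 0) : pPhi Γ A B = pPhi Γ A' B' := by
  have t1 := pPhi_triangle hyp A A' B
  have t2 := pPhi_triangle hyp A' B' B
  have t3 := pPhi_triangle hyp A' A B'
  have t4 := pPhi_triangle hyp A B B'
  have hA' : pPhi Γ A' A = 0 := by rwa [pPhi_comm hyp]
  have hB' : pPhi Γ B' B = 0 := by rwa [pPhi_comm hyp]
  have := pPhi_nonneg (Γ := Γ) A B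
  have := pPhi_nonneg (Γ := Γ) A' B'
  linarith

lemma flipnull (hyp : ThreePoint Γ) {c : ℝ} (hc : c ∈ Icc (0:ℝ) 1) (P : X × X) :
    pPhi Γ (pS Γ c P.swap) ((pS Γ c P).swap) = 0 := by
  obtain ⟨p₁, p₂⟩ := P
  unfold pPhi pS
  simp only [Prod.swap_prod_mk]
  rw [mul_eq_zero]; right
  rw [dist_eq_zero]
  have := Wd.wordeq (n := 1) hyp ![p₁, p₂]
    (w₁ := Wd.node (Wd.node (Wd.leaf 0) (Wd.leaf 1) c) (Wd.node (Wd.leaf 1) (Wd.leaf 0) c) (1/2))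
    (w₂ := Wd.node (Wd.leaf 0) (Wd.leaf 1) (1/2))
    (by simp only [Wd.valid, true_and]; exact ⟨hc, hc, half01⟩)
    (by simp only [Wd.valid, true_and]; exact half01)
    (by funext j; fin_cases j <;> simp [Wd.coeff] <;> ring)
  simpa [Wd.ev] using this

lemma Psi_negPre (hyp : ThreePoint Γ) (a b : Pre X) :
    Psi Γ (negPre a) (negPre b) = Psi Γ a b := by
  unfold Psi negPre
  simp only []
  have hma := div_mem_Icc a.c.coe_nonneg b.c.coe_nonneg
  have hmb : (b.c : ℝ) / ((a.c : ℝ) + (b.c : ℝ)) ∈ Icc (0:ℝ) 1 := by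
    have := div_mem_Icc b.c.coe_nonneg a.c.coe_nonneg; rwa [add_comm] at this
  congr 1
  have e1 : pPhi Γ (pS Γ ((a.c : ℝ)/((a.c:ℝ)+(b.c:ℝ))) a.P.swap)
      (pS Γ ((b.c : ℝ)/((a.c:ℝ)+(b.c:ℝ))) b.P.swap)
      = pPhi Γ ((pS Γ ((a.c : ℝ)/((a.c:ℝ)+(b.c:ℝ))) a.P).swap)
        ((pS Γ ((b.c : ℝ)/((a.c:ℝ)+(b.c:ℝ))) b.P).swap) :=
    pPhi_congr hyp (flipnull hyp hma a.P) (flipnull hyp hmb b.P)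
  rw [e1, pPhi_swap]

lemma Psi_smulPre_nonneg (hyp : ThreePoint Γ) {r : ℝ} (hr : 0 ≤ r) (a b : Pre X) :
    Psi Γ (smulPre r a) (smulPre r b) = r * Psi Γ a b := by
  unfold smulPre
  rw [if_pos hr, if_pos hr]
  rcases eq_or_lt_of_le hr with h0 | hpos
  · rw [← h0]
    rw [Psi_zero_scale (by simp), zero_mul]
  · unfold Psi
    simp only [NNReal.coe_mul, Real.coe_toNNReal r hr]
    have e1 : r * (a.c : ℝ) / (r * (a.c:ℝ) + r * (b.c:ℝ)) = (a.c : ℝ) / ((a.c:ℝ) + (b.c:ℝ)) := by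
      rw [← mul_add, mul_div_mul_left _ _ (ne_of_gt hpos)]
    have e2 : r * (b.c : ℝ) / (r * (a.c:ℝ) + r * (b.c:ℝ)) = (b.c : ℝ) / ((a.c:ℝ) + (b.c:ℝ)) := by
      rw [← mul_add, mul_div_mul_left _ _ (ne_of_gt hpos)]
    rw [e1, e2]
    ring

lemma smulPre_neg (r : ℝ) (hr : r < 0) (a : Pre X) :
    smulPre r a = negPre (smulPre (-r) a) := by
  unfold smulPre negPre
  rw [if_neg (not_le.mpr hr), if_pos (by linarith : (0:ℝ) ≤ -r)]

lemma Psi_smulPre (hyp : ThreePoint Γ) (r : ℝ) (a b : Pre X) :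
    Psi Γ (smulPre r a) (smulPre r b) = |r| * Psi Γ a b := by
  rcases le_or_gt 0 r with hr | hr
  · rw [abs_of_nonneg hr]; exact Psi_smulPre_nonneg hyp hr a b
  · rw [abs_of_neg hr, smulPre_neg r hr, smulPre_neg r hr, Psi_negPre hyp]
    exact Psi_smulPre_nonneg hyp (by linarith) a b

/-- Key compatibility: adding `b` on the right is `Psi`-nonexpansive. -/
lemma Psi_add_right (hyp : ThreePoint Γ) (a a' b : Pre X) :
    Psi Γ (addPre Γ a b) (addPre Γ a' b) ≤ Psi Γ a a' := by
  set lam : ℝ := (a.c : ℝ) with hlam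
  set mu : ℝ := (a'.c : ℝ) with hmu
  set nu : ℝ := (b.c : ℝ) with hnu
  have hl0 : 0 ≤ lam := a.c.coe_nonneg
  have hm0 : 0 ≤ mu := a'.c.coe_nonneg
  have hn0 : 0 ≤ nu := b.c.coe_nonneg
  by_cases hlm : lam + mu = 0
  · have hla : lam = 0 := by linarith
    have hmb : mu = 0 := by linarith
    have : addPre Γ a b = addPre Γ a' b := by
      unfold addPre
      have hca : a.c = 0 := by
        ext; exact hla
      have hcb : a'.c = 0 := by
        ext; exact hmb
      rw [hca, hcb]
      rw [show ((0 : NNReal) : ℝ) = 0 from rfl]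
      rw [zero_div, pComb_zero, pComb_zero]
    rw [this, Psi_self hyp]
    exact Psi_nonneg a a'
  by_cases hln : lam + nu = 0
  · have hla : lam = 0 := by linarith
    have hnb : nu = 0 := by linarith
    have e1 : Psi Γ (addPre Γ a b) (addPre Γ a' b)
        = ((addPre Γ a' b).c : ℝ) * dist (addPre Γ a' b).P.1 (addPre Γ a' b).P.2 := by
      refine Psi_left_zero hyp ?_ _
      show ((a.c + b.c : NNReal) : ℝ) = 0
      push_cast
      rw [← hlam, ← hnu]; linarith
    have e2 : Psi Γ a a' = mu * dist a'.P.1 a'.P.2 := by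
      rw [Psi_comm hyp]
      exact Psi_right_zero hyp a' (by rw [← hlam]; exact hla)
    rw [e1, e2]
    have hP : (addPre Γ a' b).P = a'.P := by
      unfold addPre
      simp only []
      rw [← hmu, ← hnu, hnb, add_zero]
      rcases eq_or_ne mu 0 with h0 | h0
      · exact absurd (by rw [h0, hla, add_zero] : lam + mu = 0) hlm
      · rw [div_self h0, pComb_one]
    rw [hP]
    have hc : ((addPre Γ a' b).c : ℝ) = mu := by
      show ((a'.c + b.c : NNReal) : ℝ) = mu
      push_cast
      rw [← hmu, ← hnu]; linarith
    rw [hc]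
  by_cases hmn : mu + nu = 0
  · have hmb : mu = 0 := by linarith
    have hnb : nu = 0 := by linarith
    have e1 : Psi Γ (addPre Γ a b) (addPre Γ a' b)
        = ((addPre Γ a b).c : ℝ) * dist (addPre Γ a b).P.1 (addPre Γ a b).P.2 := by
      refine Psi_right_zero hyp _ ?_
      show ((a'.c + b.c : NNReal) : ℝ) = 0
      push_cast
      rw [← hmu, ← hnu]; linarith
    have e2 : Psi Γ a a' = lam * dist a.P.1 a.P.2 :=
      Psi_right_zero hyp a (by rw [← hmu]; exact hmb)
    rw [e1, e2]
    have hP : (addPre Γ a b).P = a.P := by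
      unfold addPre
      simp only []
      rw [← hlam, ← hnu, hnb, add_zero]
      rcases eq_or_ne lam 0 with h0 | h0
      · exfalso; exact hlm (by linarith)
      · rw [div_self h0, pComb_one]
    rw [hP]
    have hc : ((addPre Γ a b).c : ℝ) = lam := by
      show ((a.c + b.c : NNReal) : ℝ) = lam
      push_cast
      rw [← hlam, ← hnu]; linarith
    rw [hc]
  -- main case
  · have hlm' : 0 < lam + mu := lt_of_le_of_ne (by linarith) (Ne.symm hlm)
    have hln' : 0 < lam + nu := lt_of_le_of_ne (by linarith) (Ne.symm hln)
    have hmn' : 0 < mu + nu := lt_of_le_of_ne (by linarith) (Ne.symm hmn)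
    set σ : ℝ := lam + mu + 2 * nu with hσ
    have hσpos : 0 < σ := by simp only [hσ]; linarith
    have hscale1 : ((addPre Γ a b).c : ℝ) = lam + nu := by
      show ((a.c + b.c : NNReal) : ℝ) = lam + nu
      push_cast; rw [← hlam, ← hnu]
    have hscale2 : ((addPre Γ a' b).c : ℝ) = mu + nu := by
      show ((a'.c + b.c : NNReal) : ℝ) = mu + nu
      push_cast; rw [← hmu, ← hnu]
    have hLHS := Psi_scale hyp (addPre Γ a b) (addPre Γ a' b)
      (σ := σ) (by rw [hscale1, hscale2]; simp only [hσ]; linarith) hσpos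
    rw [hscale1, hscale2] at hLHS
    set u : ℝ := (lam + mu) / σ with hu
    set w : ℝ := lam / (lam + mu) with hw
    set w' : ℝ := mu / (lam + mu) with hw'
    have humem : u ∈ Icc (0:ℝ) 1 := by
      constructor
      · exact div_nonneg (by linarith) (le_of_lt hσpos)
      · rw [hu, div_le_one hσpos]; simp only [hσ]; linarith
    have hwmem : w ∈ Icc (0:ℝ) 1 := div_mem_Icc hl0 hm0
    have hw'mem : w' ∈ Icc (0:ℝ) 1 := by
      have := div_mem_Icc hm0 hl0; rwa [add_comm] at this
    set E₁ := pComb Γ u (pS Γ w a.P) (pS Γ (1/2) b.P) with hE₁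
    set E₂ := pComb Γ u (pS Γ w' a'.P) (pS Γ (1/2) b.P) with hE₂
    have heq1 : pPhi Γ (pS Γ ((lam + nu)/σ) (addPre Γ a b).P) E₁ = 0 := by
      have hP : (addPre Γ a b).P = pComb Γ (lam / (lam + nu)) a.P b.P := rfl
      rw [hP]
      have hσ0 : lam + mu + 2 * nu ≠ 0 := ne_of_gt (by rw [hσ] at hσpos; exact hσpos)
      refine equiv4 hyp ?_ (div_mem_Icc hl0 hn0) humem hwmem ?_ ?_ a.P b.P
      · constructor
        · exact div_nonneg (by linarith) (le_of_lt hσpos)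
        · rw [div_le_one hσpos]; simp only [hσ]; linarith
      · rw [hu, hw, hσ]
        field_simp
      · rw [hu, hσ]
        field_simp
        ring
    have heq2 : pPhi Γ (pS Γ ((mu + nu)/σ) (addPre Γ a' b).P) E₂ = 0 := by
      have hP : (addPre Γ a' b).P = pComb Γ (mu / (mu + nu)) a'.P b.P := rfl
      rw [hP]
      have hσ0 : lam + mu + 2 * nu ≠ 0 := ne_of_gt (by rw [hσ] at hσpos; exact hσpos)
      refine equiv4 hyp ?_ (div_mem_Icc hm0 hn0) humem hw'mem ?_ ?_ a'.P b.P
      · constructor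
        · exact div_nonneg (by linarith) (le_of_lt hσpos)
        · rw [div_le_one hσpos]; simp only [hσ]; linarith
      · rw [hu, hw', hσ]
        field_simp
      · rw [hu, hσ]
        field_simp
        ring
    have hmid : pPhi Γ (pS Γ ((lam + nu)/σ) (addPre Γ a b).P)
        (pS Γ ((mu + nu)/σ) (addPre Γ a' b).P) = pPhi Γ E₁ E₂ :=
      pPhi_congr hyp heq1 heq2
    have hcomb : pPhi Γ E₁ E₂ ≤ u * pPhi Γ (pS Γ w a.P) (pS Γ w' a'.P) := by
      have h2 := pPhi_comb_le hyp humem (pS Γ w a.P) (pS Γ (1/2) b.P) (pS Γ w' a'.P) (pS Γ (1/2) b.P)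
      rw [pPhi_self hyp] at h2
      rw [hE₁, hE₂]
      linarith [h2]
    have hfin : Psi Γ a a' = (lam + mu) * pPhi Γ (pS Γ w a.P) (pS Γ w' a'.P) := rfl
    rw [hLHS, hmid, hfin]
    calc σ * pPhi Γ E₁ E₂ ≤ σ * (u * pPhi Γ (pS Γ w a.P) (pS Γ w' a'.P)) :=
          mul_le_mul_of_nonneg_left hcomb (le_of_lt hσpos)
      _ = (lam + mu) * pPhi Γ (pS Γ w a.P) (pS Γ w' a'.P) := by
          rw [hu]; field_simp

/-! ### Collinear scaling and associativity -/

lemma coll_core (hyp : ThreePoint Γ) {s₁ s₂ t : ℝ} (h₁ : s₁ ∈ Icc (0:ℝ) 1)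
    (h₂ : s₂ ∈ Icc (0:ℝ) 1) (ht : t ∈ Icc (0:ℝ) 1)
    (heq : s₁ + (1 - t) = (1 - s₂) * (1 - t) + s₂ * t) (p₁ p₂ : X) :
    ccomb Γ (ccomb Γ p₂ p₁ s₁) (ccomb Γ p₂ p₁ (1 - t)) (1/2)
      = ccomb Γ p₂ (ccomb Γ (ccomb Γ p₂ p₁ (1 - t)) (ccomb Γ p₁ p₂ (1 - t)) s₂) (1/2) := by
  have ht' := one_sub_mem ht
  have := Wd.wordeq (n := 1) hyp ![p₁, p₂]
    (w₁ := Wd.node (Wd.node (Wd.leaf 1) (Wd.leaf 0) s₁) (Wd.node (Wd.leaf 1) (Wd.leaf 0) (1-t))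
      (1/2))
    (w₂ := Wd.node (Wd.leaf 1)
      (Wd.node (Wd.node (Wd.leaf 1) (Wd.leaf 0) (1-t)) (Wd.node (Wd.leaf 0) (Wd.leaf 1) (1-t)) s₂)
      (1/2))
    (by simp only [Wd.valid, true_and]; exact ⟨h₁, ht', half01⟩)
    (by simp only [Wd.valid, true_and]; exact ⟨⟨ht', ht', h₂⟩, half01⟩)
    (by funext j; fin_cases j <;> simp [Wd.coeff] <;>
      first
        | linear_combination heq / 2
        | linear_combination -heq / 2
        | ring)
  simpa [Wd.ev] using this

lemma collinear (hyp : ThreePoint Γ) {α β : ℝ} (hβ : 0 ≤ β) (hαβ : β ≤ α)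
    (lam : NNReal) (P : X × X) :
    Psi Γ ⟨(α - β).toNNReal * lam, P⟩
      (addPre Γ ⟨α.toNNReal * lam, P⟩ ⟨β.toNNReal * lam, P.swap⟩) = 0 := by
  have hα : 0 ≤ α := le_trans hβ hαβ
  have hab : 0 ≤ α - β := by linarith
  by_cases hcrit : α * (lam : ℝ) = 0
  · apply Psi_zero_scale
    show (((α - β).toNNReal * lam : NNReal) : ℝ)
      + (((α.toNNReal * lam + β.toNNReal * lam : NNReal)) : ℝ) = 0
    push_cast [Real.coe_toNNReal _ hab, Real.coe_toNNReal _ hα, Real.coe_toNNReal _ hβ]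
    linear_combination 2 * hcrit
  · have hl0 : (lam : ℝ) ≠ 0 := fun h => hcrit (by rw [h, mul_zero])
    have hα0 : α ≠ 0 := fun h => hcrit (by rw [h, zero_mul])
    have hαpos : 0 < α := lt_of_le_of_ne hα (Ne.symm hα0)
    have hαβpos : 0 < α + β := by linarith
    unfold Psi addPre
    simp only []
    rw [mul_eq_zero]; right
    have hc1 : (((α - β).toNNReal * lam : NNReal) : ℝ) = (α - β) * lam := by
      push_cast [Real.coe_toNNReal _ hab]; ring
    have hc2 : (((α.toNNReal * lam + β.toNNReal * lam : NNReal)) : ℝ) = (α + β) * lam := by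
      push_cast [Real.coe_toNNReal _ hα, Real.coe_toNNReal _ hβ]; ring
    have hc3 : ((α.toNNReal * lam : NNReal) : ℝ) = α * lam := by
      push_cast [Real.coe_toNNReal _ hα]; ring
    have hc4 : ((β.toNNReal * lam : NNReal) : ℝ) = β * lam := by
      push_cast [Real.coe_toNNReal _ hβ]; ring
    rw [hc1, hc2, hc3, hc4]
    have e1 : (α - β) * (lam:ℝ) / ((α - β) * lam + (α + β) * lam) = (α - β) / (2 * α) := by
      rw [show (α - β) * (lam:ℝ) + (α + β) * lam = (2 * α) * lam by ring,
        mul_div_mul_right _ _ hl0]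
    have e2 : (α + β) * (lam:ℝ) / ((α - β) * lam + (α + β) * lam) = (α + β) / (2 * α) := by
      rw [show (α - β) * (lam:ℝ) + (α + β) * lam = (2 * α) * lam by ring,
        mul_div_mul_right _ _ hl0]
    have e3 : α * (lam:ℝ) / (α * lam + β * lam) = α / (α + β) := by
      rw [show α * (lam:ℝ) + β * lam = (α + β) * lam by ring, mul_div_mul_right _ _ hl0]
    rw [e1, e2, e3]
    obtain ⟨p₁, p₂⟩ := P
    unfold pPhi pS pComb
    simp only [Prod.swap_prod_mk]
    rw [mul_eq_zero]; right
    rw [dist_eq_zero]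
    have hs₁ : (α - β) / (2 * α) ∈ Icc (0:ℝ) 1 :=
      ⟨div_nonneg hab (by linarith), by rw [div_le_one (by linarith)]; linarith⟩
    have hs₂ : (α + β) / (2 * α) ∈ Icc (0:ℝ) 1 :=
      ⟨div_nonneg (by linarith) (by linarith), by rw [div_le_one (by linarith)]; linarith⟩
    have htm : α / (α + β) ∈ Icc (0:ℝ) 1 := div_mem_Icc hα hβ
    have heq : (α - β) / (2 * α) + (1 - α / (α + β))
        = (1 - (α + β) / (2 * α)) * (1 - α / (α + β)) + (α + β) / (2 * α) * (α / (α + β)) := by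
      field_simp
      ring
    exact coll_core hyp hs₁ hs₂ htm heq p₁ p₂

lemma assoc_core (hyp : ThreePoint Γ) {t₂ t₁ s₂ s₁ : ℝ} (h2 : t₂ ∈ Icc (0:ℝ) 1)
    (h1 : t₁ ∈ Icc (0:ℝ) 1) (hs2 : s₂ ∈ Icc (0:ℝ) 1) (hs1 : s₁ ∈ Icc (0:ℝ) 1)
    (e₁ : t₂ * t₁ = s₁) (e₂ : (1 - t₂) * t₁ = (1 - s₁) * s₂) (p q r : X) :
    ccomb Γ (ccomb Γ p q (1 - t₂)) r (1 - t₁) = ccomb Γ p (ccomb Γ q r (1 - s₂)) (1 - s₁) := by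
  have := Wd.wordeq (n := 2) hyp ![p, q, r]
    (w₁ := Wd.node (Wd.node (Wd.leaf 0) (Wd.leaf 1) (1 - t₂)) (Wd.leaf 2) (1 - t₁))
    (w₂ := Wd.node (Wd.leaf 0) (Wd.node (Wd.leaf 1) (Wd.leaf 2) (1 - s₂)) (1 - s₁))
    (by simp only [Wd.valid, true_and]; exact ⟨one_sub_mem h2, one_sub_mem h1⟩)
    (by simp only [Wd.valid, true_and]; exact ⟨one_sub_mem hs2, one_sub_mem hs1⟩)
    (by
      funext j
      fin_cases j <;> simp [Wd.coeff] <;>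
        first
        | linear_combination e₁
        | linear_combination -e₁
        | linear_combination e₂
        | linear_combination -e₂
        | linear_combination e₁ + e₂
        | linear_combination -e₁ - e₂
        | linear_combination e₁ - e₂
        | linear_combination e₂ - e₁
        | ring)
  simpa [Wd.ev] using this

lemma addPre_comm_rel (hyp : ThreePoint Γ) (x y : Pre X) :
    Psi Γ (addPre Γ x y) (addPre Γ y x) = 0 := by
  by_cases h0 : (x.c : ℝ) + (y.c : ℝ) = 0
  · apply Psi_zero_scale
    show ((x.c + y.c : NNReal) : ℝ) + ((y.c + x.c : NNReal) : ℝ) = 0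
    push_cast
    linarith
  · refine Psi_eq_of_eq hyp ?_
    unfold addPre
    have hx0 := x.c.coe_nonneg
    have hy0 := y.c.coe_nonneg
    have hyx : (y.c : ℝ) / ((y.c : ℝ) + (x.c : ℝ)) = 1 - (x.c : ℝ) / ((x.c : ℝ) + (y.c : ℝ)) := by
      rw [eq_sub_iff_add_eq, add_comm ((y.c:ℝ)) (x.c:ℝ), ← add_div, add_comm ((y.c:ℝ)) (x.c:ℝ), div_self h0]
    have hP : pComb Γ ((x.c : ℝ)/((x.c:ℝ)+(y.c:ℝ))) x.P y.P
        = pComb Γ ((y.c : ℝ)/((y.c:ℝ)+(x.c:ℝ))) y.P x.P := by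
      rw [hyx]
      exact pComb_comm hyp (div_mem_Icc x.c.coe_nonneg y.c.coe_nonneg) x.P y.P
    rw [hP, add_comm x.c y.c]

/-! ### Pre-level module axioms -/

lemma preext {c₁ c₂ : NNReal} {P₁ P₂ : X × X} (h1 : c₁ = c₂) (h2 : P₁ = P₂) :
    (⟨c₁, P₁⟩ : Pre X) = ⟨c₂, P₂⟩ := by rw [h1, h2]

lemma assocPre (hyp : ThreePoint Γ) (a b c : Pre X) :
    Psi Γ (addPre Γ (addPre Γ a b) c) (addPre Γ a (addPre Γ b c)) = 0 := by
  have hl0 : (0:ℝ) ≤ (a.c : ℝ) := a.c.coe_nonneg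
  have hm0 : (0:ℝ) ≤ (b.c : ℝ) := b.c.coe_nonneg
  have hn0 : (0:ℝ) ≤ (c.c : ℝ) := c.c.coe_nonneg
  refine Psi_eq_of_eq hyp ?_
  have hcgoal : a.c + b.c + c.c = a.c + (b.c + c.c) := add_assoc _ _ _
  have hP : pComb Γ (((a.c + b.c : NNReal) : ℝ) / (((a.c + b.c : NNReal) : ℝ) + (c.c : ℝ)))
      (pComb Γ ((a.c : ℝ) / ((a.c : ℝ) + (b.c : ℝ))) a.P b.P) c.P
      = pComb Γ ((a.c : ℝ) / ((a.c : ℝ) + ((b.c + c.c : NNReal) : ℝ)))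
        a.P (pComb Γ ((b.c : ℝ) / ((b.c : ℝ) + (c.c : ℝ))) b.P c.P) := by
    rw [NNReal.coe_add, NNReal.coe_add]
    by_cases h12 : (a.c : ℝ) + (b.c : ℝ) = 0
    · have ea : (a.c : ℝ) = 0 := by linarith
      have eb : (b.c : ℝ) = 0 := by linarith
      rw [ea, eb]
      norm_num [pComb_zero]
    by_cases h23 : (b.c : ℝ) + (c.c : ℝ) = 0
    · have eb : (b.c : ℝ) = 0 := by linarith
      have ec : (c.c : ℝ) = 0 := by linarith
      have hl' : (a.c : ℝ) ≠ 0 := fun h => h12 (by rw [h, eb]; ring)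
      rw [eb, ec]
      norm_num [div_self hl', pComb_one]
    · have h12' : 0 < (a.c : ℝ) + (b.c : ℝ) := lt_of_le_of_ne (by linarith) (Ne.symm h12)
      have h23' : 0 < (b.c : ℝ) + (c.c : ℝ) := lt_of_le_of_ne (by linarith) (Ne.symm h23)
      have hσ : 0 < (a.c : ℝ) + (b.c : ℝ) + (c.c : ℝ) := by linarith
      have hσ' : 0 < (a.c : ℝ) + ((b.c : ℝ) + (c.c : ℝ)) := by linarith
      have core := fun (p q r : X) => assoc_core hyp
        (t₂ := (a.c : ℝ) / ((a.c : ℝ) + (b.c : ℝ)))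
        (t₁ := ((a.c : ℝ) + (b.c : ℝ)) / ((a.c : ℝ) + (b.c : ℝ) + (c.c : ℝ)))
        (s₂ := (b.c : ℝ) / ((b.c : ℝ) + (c.c : ℝ)))
        (s₁ := (a.c : ℝ) / ((a.c : ℝ) + ((b.c : ℝ) + (c.c : ℝ))))
        (div_mem_Icc hl0 hm0)
        (⟨div_nonneg (by linarith) (by linarith), by rw [div_le_one hσ]; linarith⟩)
        (div_mem_Icc hm0 hn0)
        (⟨div_nonneg (by linarith) (by linarith), by rw [div_le_one hσ']; linarith⟩)
        (by
          rw [div_mul_div_comm, mul_comm ((a.c:ℝ)) (((a.c:ℝ)) + (b.c:ℝ)),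
            mul_div_mul_left _ _ (ne_of_gt h12'), ← add_assoc])
        (by field_simp; ring)
        p q r
      unfold pComb
      rw [Prod.mk.injEq]
      constructor
      · exact core a.P.1 b.P.1 c.P.1
      · exact core a.P.2 b.P.2 c.P.2
  exact preext hcgoal hP

lemma addPre_zero_left (Z : X × X) (a : Pre X) : addPre Γ ⟨0, Z⟩ a = a := by
  unfold addPre
  simp only [NNReal.coe_zero, zero_div, pComb_zero, zero_add]

lemma addPre_zero_right (hyp : ThreePoint Γ) (Z : X × X) (a : Pre X) :
    Psi Γ (addPre Γ a ⟨0, Z⟩) a = 0 := by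
  rcases eq_or_ne ((a.c : ℝ)) 0 with h0 | h0
  · apply Psi_zero_scale
    show ((a.c + 0 : NNReal) : ℝ) + (a.c : ℝ) = 0
    push_cast
    linarith
  · refine Psi_eq_of_eq hyp ?_
    unfold addPre
    simp only [NNReal.coe_zero, add_zero, div_self h0, pComb_one]

lemma negadd_rel (hyp : ThreePoint Γ) (a : Pre X) (z : X) :
    Psi Γ (addPre Γ (negPre a) a) ⟨0, (z, z)⟩ = 0 := by
  rw [Psi_norm hyp]
  rcases eq_or_ne ((a.c : ℝ)) 0 with h0 | h0
  · have : (((negPre a).c + a.c : NNReal) : ℝ) = 0 := by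
      show ((a.c + a.c : NNReal) : ℝ) = 0
      push_cast; linarith
    rw [show (addPre Γ (negPre a) a).c = (negPre a).c + a.c from rfl, this, zero_mul]
  · have hrat : ((negPre a).c : ℝ) / (((negPre a).c : ℝ) + (a.c : ℝ)) = 1/2 := by
      show (a.c : ℝ) / ((a.c : ℝ) + (a.c : ℝ)) = 1/2
      rw [show (a.c : ℝ) + (a.c : ℝ) = 2 * (a.c : ℝ) by ring]
      rw [div_eq_iff (by positivity : 2 * (a.c:ℝ) ≠ 0)]
      ring
    have hP : (addPre Γ (negPre a) a).P
        = (ccomb Γ a.P.2 a.P.1 (1 - 1/2), ccomb Γ a.P.1 a.P.2 (1 - 1/2)) := by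
      show pComb Γ _ (negPre a).P a.P = _
      rw [show (negPre a).P = a.P.swap from rfl]
      unfold pComb
      rw [hrat]
      rfl
    rw [hP]
    have hcc : ccomb Γ a.P.2 a.P.1 (1 - 1/2) = ccomb Γ a.P.1 a.P.2 (1 - 1/2) := by
      rw [ccomb_comm hyp (by norm_num : (1:ℝ) - 1/2 ∈ Icc (0:ℝ) 1) a.P.2 a.P.1]
      norm_num
    simp only []
    rw [hcc, dist_self, mul_zero]

lemma one_smulPre (a : Pre X) : smulPre 1 a = a := by
  unfold smulPre
  rw [if_pos (by norm_num : (0:ℝ) ≤ 1), Real.toNNReal_one, one_mul]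

lemma zero_smulPre (hyp : ThreePoint Γ) (a : Pre X) (z : X) :
    Psi Γ (smulPre 0 a) ⟨0, (z, z)⟩ = 0 := by
  apply Psi_zero_scale
  unfold smulPre
  rw [if_pos (le_refl (0:ℝ))]
  simp

lemma smul_zeroPre (r : ℝ) (z : X) : smulPre r (⟨0, (z, z)⟩ : Pre X) = ⟨0, (z, z)⟩ := by
  unfold smulPre
  rcases le_or_gt 0 r with hr | hr
  · rw [if_pos hr, mul_zero]
  · rw [if_neg (not_le.mpr hr), mul_zero]
    rfl

lemma mul_smulPre (hyp : ThreePoint Γ) (r s : ℝ) (a : Pre X) :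
    Psi Γ (smulPre (r * s) a) (smulPre r (smulPre s a)) = 0 := by
  rcases le_or_gt 0 r with hr | hr <;> rcases le_or_gt 0 s with hs | hs
  · refine Psi_eq_of_eq hyp ?_
    unfold smulPre
    rw [if_pos (mul_nonneg hr hs), if_pos hs, if_pos hr]
    simp only []
    rw [Real.toNNReal_mul hr, mul_assoc]
  · rcases eq_or_lt_of_le hr with h0 | hrpos
    · apply Psi_zero_scale
      rw [← h0]
      simp [smulPre]
    · refine Psi_eq_of_eq hyp ?_
      unfold smulPre
      rw [if_neg (not_le.mpr (mul_neg_of_pos_of_neg hrpos hs)), if_neg (not_le.mpr hs),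
        if_pos hr]
      simp only []
      rw [show -(r * s) = r * (-s) by ring, Real.toNNReal_mul hr, mul_assoc]
  · rcases eq_or_lt_of_le hs with h0 | hspos
    · apply Psi_zero_scale
      rw [← h0]
      simp [smulPre, not_le.mpr hr]
    · refine Psi_eq_of_eq hyp ?_
      unfold smulPre
      rw [if_neg (not_le.mpr (mul_neg_of_neg_of_pos hr hspos)), if_pos hs,
        if_neg (not_le.mpr hr)]
      simp only []
      rw [show -(r * s) = -r * s by ring, Real.toNNReal_mul (by linarith), mul_assoc]
  · refine Psi_eq_of_eq hyp ?_
    unfold smulPre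
    rw [if_pos (le_of_lt (mul_pos_of_neg_of_neg hr hs)), if_neg (not_le.mpr hs),
      if_neg (not_le.mpr hr)]
    simp only []
    rw [show r * s = -r * -s by ring, Real.toNNReal_mul (by linarith), mul_assoc,
      Prod.swap_swap]

lemma ratio_smul {r : ℝ} (hr : 0 < r) (x y : NNReal) :
    ((r.toNNReal * x : NNReal) : ℝ) / (((r.toNNReal * x : NNReal)) + ((r.toNNReal * y : NNReal)))
      = (x : ℝ) / ((x : ℝ) + (y : ℝ)) := by
  push_cast [Real.coe_toNNReal _ (le_of_lt hr)]
  rcases eq_or_ne ((x : ℝ) + (y : ℝ)) 0 with h0 | h0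
  · have hx0 : (x : ℝ) = 0 := by
      have := x.coe_nonneg; have := y.coe_nonneg; linarith
    rw [hx0, mul_zero, zero_div, zero_div]
  · rw [← mul_add, mul_div_mul_left _ _ (ne_of_gt hr)]

lemma smul_addPre (hyp : ThreePoint Γ) (r : ℝ) (a b : Pre X) :
    Psi Γ (smulPre r (addPre Γ a b)) (addPre Γ (smulPre r a) (smulPre r b)) = 0 := by
  rcases lt_trichotomy r 0 with hr | hr | hr
  · refine Psi_eq_of_eq hyp ?_
    unfold smulPre
    rw [if_neg (not_le.mpr hr), if_neg (not_le.mpr hr), if_neg (not_le.mpr hr)]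
    show Pre.mk ((-r).toNNReal * (a.c + b.c)) ((addPre Γ a b).P).swap = _
    have hrpos : 0 < -r := by linarith
    unfold addPre
    simp only []
    rw [mul_add]
    congr 1
    rw [ratio_smul hrpos a.c b.c, pComb_swap]
  · subst hr
    apply Psi_zero_scale
    simp [smulPre, addPre]
  · refine Psi_eq_of_eq hyp ?_
    unfold smulPre
    rw [if_pos (le_of_lt hr), if_pos (le_of_lt hr), if_pos (le_of_lt hr)]
    show Pre.mk (r.toNNReal * (a.c + b.c)) ((addPre Γ a b).P) = _
    unfold addPre
    simp only []
    rw [mul_add]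
    congr 1
    rw [ratio_smul hr a.c b.c]

lemma add_smul_core (hyp : ThreePoint Γ) {r s : ℝ} (hr : 0 ≤ r) (hs : s < 0) (a : Pre X) :
    Psi Γ (smulPre (r + s) a) (addPre Γ (smulPre r a) (smulPre s a)) = 0 := by
  have hr' : smulPre r a = ⟨r.toNNReal * a.c, a.P⟩ := by unfold smulPre; rw [if_pos hr]
  have hs'' : smulPre s a = ⟨(-s).toNNReal * a.c, a.P.swap⟩ := by
    unfold smulPre; rw [if_neg (not_le.mpr hs)]
  rcases le_or_gt 0 (r + s) with hrs | hrs
  · have hgoal : smulPre (r + s) a = ⟨(r - -s).toNNReal * a.c, a.P⟩ := by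
      unfold smulPre; rw [if_pos hrs]; norm_num
    rw [hgoal, hr', hs'']
    exact collinear hyp (by linarith) (by linarith) a.c a.P
  · have hgoal : smulPre (r + s) a = ⟨(-s - r).toNNReal * a.c, a.P.swap⟩ := by
      unfold smulPre; rw [if_neg (not_le.mpr hrs)]
      rw [show -(r + s) = -s - r by ring]
    have c1 := collinear hyp (α := -s) (β := r) hr (by linarith) a.c a.P.swap
    rw [Prod.swap_swap] at c1
    have c2 := addPre_comm_rel hyp (⟨(-s).toNNReal * a.c, a.P.swap⟩ : Pre X)
      (⟨r.toNNReal * a.c, a.P⟩ : Pre X)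
    have tri := Psi_triangle hyp (⟨(-s - r).toNNReal * a.c, a.P.swap⟩ : Pre X)
      (addPre Γ ⟨(-s).toNNReal * a.c, a.P.swap⟩ ⟨r.toNNReal * a.c, a.P⟩)
      (addPre Γ ⟨r.toNNReal * a.c, a.P⟩ ⟨(-s).toNNReal * a.c, a.P.swap⟩)
    have hn := Psi_nonneg (Γ := Γ) (⟨(-s - r).toNNReal * a.c, a.P.swap⟩ : Pre X)
      (addPre Γ ⟨r.toNNReal * a.c, a.P⟩ ⟨(-s).toNNReal * a.c, a.P.swap⟩)
    rw [hgoal, hr', hs'']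
    linarith

lemma add_smulPre (hyp : ThreePoint Γ) (r s : ℝ) (a : Pre X) :
    Psi Γ (smulPre (r + s) a) (addPre Γ (smulPre r a) (smulPre s a)) = 0 := by
  rcases le_or_gt 0 r with hr | hr <;> rcases le_or_gt 0 s with hs | hs
  · refine Psi_eq_of_eq hyp ?_
    unfold smulPre
    rw [if_pos (by linarith : (0:ℝ) ≤ r + s), if_pos hs, if_pos hr]
    show Pre.mk ((r+s).toNNReal * a.c) a.P = _
    unfold addPre
    simp only []
    rw [pComb_self, Real.toNNReal_add hr hs, add_mul]
  · exact add_smul_core hyp hr hs a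
  · have core := add_smul_core hyp hs hr a
    have c2 := addPre_comm_rel hyp (smulPre s a) (smulPre r a)
    have tri := Psi_triangle hyp (smulPre (s + r) a)
      (addPre Γ (smulPre s a) (smulPre r a)) (addPre Γ (smulPre r a) (smulPre s a))
    have hn := Psi_nonneg (Γ := Γ) (smulPre (s + r) a) (addPre Γ (smulPre r a) (smulPre s a))
    rw [add_comm r s]
    linarith
  · refine Psi_eq_of_eq hyp ?_
    unfold smulPre
    rw [if_neg (not_le.mpr (by linarith : r + s < 0)), if_neg (not_le.mpr hs),
      if_neg (not_le.mpr hr)]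
    show Pre.mk ((-(r+s)).toNNReal * a.c) a.P.swap = _
    unfold addPre
    simp only []
    rw [pComb_self, show -(r+s) = -r + -s by ring,
      Real.toNNReal_add (by linarith) (by linarith), add_mul]

/-! ### Pre-level norm facts -/

lemma normPre_add_le (hyp : ThreePoint Γ) (a b : Pre X) :
    ((addPre Γ a b).c : ℝ) * dist (addPre Γ a b).P.1 (addPre Γ a b).P.2
      ≤ (a.c : ℝ) * dist a.P.1 a.P.2 + (b.c : ℝ) * dist b.P.1 b.P.2 := by
  set lam : ℝ := (a.c : ℝ) with hlam
  set mu : ℝ := (b.c : ℝ) with hmu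
  have hl0 : 0 ≤ lam := a.c.coe_nonneg
  have hm0 : 0 ≤ mu := b.c.coe_nonneg
  have hcoe : ((addPre Γ a b).c : ℝ) = lam + mu := by
    show ((a.c + b.c : NNReal) : ℝ) = lam + mu
    push_cast; rfl
  rcases eq_or_ne (lam + mu) 0 with h0 | h0
  · rw [hcoe, h0, zero_mul]
    positivity
  · have hmem : 1 - lam / (lam + mu) ∈ Icc (0:ℝ) 1 := one_sub_mem (div_mem_Icc hl0 hm0)
    have hd := dist_comb_le hyp hmem a.P.1 b.P.1 a.P.2 b.P.2
    have hP1 : (addPre Γ a b).P.1 = ccomb Γ a.P.1 b.P.1 (1 - lam / (lam + mu)) := rfl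
    have hP2 : (addPre Γ a b).P.2 = ccomb Γ a.P.2 b.P.2 (1 - lam / (lam + mu)) := rfl
    rw [hcoe, hP1, hP2]
    have hlm' : 0 < lam + mu := lt_of_le_of_ne (by linarith) (Ne.symm h0)
    have e1 : (lam + mu) * (1 - (1 - lam / (lam + mu))) = lam := by field_simp; ring
    have e2 : (lam + mu) * (1 - lam / (lam + mu)) = mu := by field_simp; ring
    calc (lam + mu) * dist (ccomb Γ a.P.1 b.P.1 (1 - lam / (lam + mu)))
          (ccomb Γ a.P.2 b.P.2 (1 - lam / (lam + mu)))
        ≤ (lam + mu) * ((1 - (1 - lam / (lam + mu))) * dist a.P.1 a.P.2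
            + (1 - lam / (lam + mu)) * dist b.P.1 b.P.2) :=
          mul_le_mul_of_nonneg_left hd (by linarith)
      _ = lam * dist a.P.1 a.P.2 + mu * dist b.P.1 b.P.2 := by
          rw [mul_add, ← mul_assoc, ← mul_assoc, e1, e2]

lemma normPre_smul (r : ℝ) (a : Pre X) :
    ((smulPre r a).c : ℝ) * dist (smulPre r a).P.1 (smulPre r a).P.2
      = |r| * ((a.c : ℝ) * dist a.P.1 a.P.2) := by
  unfold smulPre
  rcases le_or_gt 0 r with hr | hr
  · rw [if_pos hr]
    simp only []
    push_cast [Real.coe_toNNReal _ hr]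
    rw [abs_of_nonneg hr]
    ring
  · rw [if_neg (not_le.mpr hr)]
    simp only []
    push_cast [Real.coe_toNNReal _ (by linarith : (0:ℝ) ≤ -r)]
    rw [abs_of_neg hr]
    show -r * (a.c:ℝ) * dist a.P.2 a.P.1 = _
    rw [dist_comm]
    ring

/-! ### Assembly of the normed space and the final theorem -/

lemma add_compat (hyp : ThreePoint Γ) {a a' b b' : Pre X} (ha : Psi Γ a a' = 0)
    (hb : Psi Γ b b' = 0) : Psi Γ (addPre Γ a b) (addPre Γ a' b') = 0 := by
  have n0 := Psi_nonneg (Γ := Γ) (addPre Γ a b) (addPre Γ a' b')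
  have T1 := Psi_triangle hyp (addPre Γ a b) (addPre Γ a' b) (addPre Γ a' b')
  have T2 := Psi_triangle hyp (addPre Γ a' b) (addPre Γ b a') (addPre Γ a' b')
  have T3 := Psi_triangle hyp (addPre Γ b a') (addPre Γ b' a') (addPre Γ a' b')
  have c1 := addPre_comm_rel hyp a' b
  have c2' := addPre_comm_rel hyp b' a'
  have r1 := Psi_add_right hyp a a' b
  have r2 := Psi_add_right hyp b b' a'
  linarith

lemma norm_lift_compat (hyp : ThreePoint Γ) {a b : Pre X} (hab : Psi Γ a b = 0) :
    (a.c : ℝ) * dist a.P.1 a.P.2 = (b.c : ℝ) * dist b.P.1 b.P.2 := by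
  have n1 := Psi_norm hyp a a.P.1
  have n2 := Psi_norm hyp b a.P.1
  have T1 := Psi_triangle hyp a b ⟨0, (a.P.1, a.P.1)⟩
  have T2 := Psi_triangle hyp b a ⟨0, (a.P.1, a.P.1)⟩
  have hba : Psi Γ b a = 0 := by rw [Psi_comm hyp]; exact hab
  linarith

lemma affine_main (Γ : Bicombing X) (hyp : ThreePoint Γ) (e : X) : Γ.IsAffine := by
  letI S : Setoid (Pre X) := preSetoid Γ hyp
  letI Z0 : Zero (Quotient S) := ⟨Quotient.mk S ⟨0, (e, e)⟩⟩
  letI A0 : Add (Quotient S) :=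
    ⟨Quotient.map₂ (addPre Γ) (by intro a a' ha b b' hb; exact add_compat hyp ha hb)⟩
  letI N0 : Neg (Quotient S) :=
    ⟨Quotient.map negPre (by
      intro a b hab
      show Psi Γ (negPre a) (negPre b) = 0
      rw [Psi_negPre hyp]; exact hab)⟩
  letI G : AddCommGroup (Quotient S) :=
    { add := (· + ·)
      zero := 0
      neg := Neg.neg
      add_assoc := by
        rintro ⟨a⟩ ⟨b⟩ ⟨c⟩
        exact Quot.sound (assocPre hyp a b c)
      zero_add := by
        rintro ⟨a⟩
        exact congrArg (Quotient.mk S) (addPre_zero_left (e, e) a)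
      add_zero := by
        rintro ⟨a⟩
        exact Quot.sound (addPre_zero_right hyp (e, e) a)
      nsmul := nsmulRec
      zsmul := zsmulRec
      neg_add_cancel := by
        rintro ⟨a⟩
        exact Quot.sound (negadd_rel hyp a e)
      add_comm := by
        rintro ⟨a⟩ ⟨b⟩
        exact Quot.sound (addPre_comm_rel hyp a b) }
  letI SM : SMul ℝ (Quotient S) :=
    ⟨fun r => Quotient.map (smulPre r) (by
      intro a b hab
      show Psi Γ (smulPre r a) (smulPre r b) = 0
      rw [Psi_smulPre hyp]; rw [hab, mul_zero])⟩
  letI M : Module ℝ (Quotient S) :=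
    { smul := SM.smul
      one_smul := by
        rintro ⟨a⟩
        exact congrArg (Quotient.mk S) (one_smulPre a)
      mul_smul := by
        intro r s
        rintro ⟨a⟩
        exact Quot.sound (mul_smulPre hyp r s a)
      smul_zero := by
        intro r
        exact congrArg (Quotient.mk S) (smul_zeroPre r e)
      smul_add := by
        intro r
        rintro ⟨a⟩ ⟨b⟩
        exact Quot.sound (smul_addPre hyp r a b)
      add_smul := by
        intro r s
        rintro ⟨a⟩
        exact Quot.sound (add_smulPre hyp r s a)
      zero_smul := by
        rintro ⟨a⟩
        exact Quot.sound (zero_smulPre hyp a e) }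
  letI N : NormedAddCommGroup (Quotient S) :=
    AddGroupNorm.toNormedAddCommGroup
      { toFun := Quotient.lift (fun a : Pre X => (a.c : ℝ) * dist a.P.1 a.P.2)
          (fun a b hab => norm_lift_compat hyp hab)
        map_zero' := by
          show ((0 : NNReal) : ℝ) * dist e e = 0
          simp
        add_le' := by
          rintro ⟨a⟩ ⟨b⟩
          exact normPre_add_le hyp a b
        neg' := by
          rintro ⟨a⟩
          show ((negPre a).c : ℝ) * dist (negPre a).P.1 (negPre a).P.2
            = (a.c : ℝ) * dist a.P.1 a.P.2
          show (a.c : ℝ) * dist a.P.2 a.P.1 = _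
          rw [dist_comm]
        eq_zero_of_map_eq_zero' := by
          rintro ⟨a⟩ h
          refine Quot.sound ?_
          show Psi Γ a ⟨0, (e, e)⟩ = 0
          rw [Psi_norm hyp]
          exact h }
  letI NS : NormedSpace ℝ (Quotient S) :=
    { norm_smul_le := by
        intro r
        rintro ⟨a⟩
        show ((smulPre r a).c : ℝ) * dist (smulPre r a).P.1 (smulPre r a).P.2
          ≤ |r| * ((a.c : ℝ) * dist a.P.1 a.P.2)
        rw [normPre_smul] }
  set f : X → Quotient S := fun x => Quotient.mk S ⟨1, (x, e)⟩ with hf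
  have key : ∀ x y : X, ∀ s : ℝ, s ∈ Icc (0:ℝ) 1 →
      (1 - s) • f x + s • f y = f (ccomb Γ x y s) := by
    intro x y s hs
    show Quotient.mk S (addPre Γ (smulPre (1-s) ⟨1, (x, e)⟩) (smulPre s ⟨1, (y, e)⟩))
      = Quotient.mk S ⟨1, (ccomb Γ x y s, e)⟩
    congr 1
    have h1s : (0:ℝ) ≤ 1 - s := by linarith [hs.2]
    have e1 : smulPre (1-s) (⟨1, (x, e)⟩ : Pre X) = ⟨(1-s).toNNReal, (x, e)⟩ := by
      unfold smulPre
      rw [if_pos h1s, mul_one]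
    have e2 : smulPre s (⟨1, (y, e)⟩ : Pre X) = ⟨s.toNNReal, (y, e)⟩ := by
      unfold smulPre
      rw [if_pos hs.1, mul_one]
    rw [e1, e2]
    unfold addPre
    refine preext ?_ ?_
    · ext
      push_cast [Real.coe_toNNReal _ h1s, Real.coe_toNNReal _ hs.1]
      ring
    · have hrat : (((1-s).toNNReal : NNReal) : ℝ)
          / ((((1-s).toNNReal : NNReal) : ℝ) + ((s.toNNReal : NNReal) : ℝ)) = 1 - s := by
        push_cast [Real.coe_toNNReal _ h1s, Real.coe_toNNReal _ hs.1]
        norm_num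
      rw [hrat]
      unfold pComb
      rw [sub_sub_cancel, ccomb_self]
  have keyiso : ∀ x y : X, dist (f x) (f y) = dist x y := by
    intro x y
    rw [dist_eq_norm, sub_eq_add_neg]
    have hneg : -(f y) = Quotient.mk S ⟨1, (e, y)⟩ := rfl
    rw [hneg]
    show ((addPre Γ ⟨1, (x,e)⟩ ⟨1, (e,y)⟩).c : ℝ)
      * dist (addPre Γ ⟨1, (x,e)⟩ ⟨1, (e,y)⟩).P.1 (addPre Γ ⟨1, (x,e)⟩ ⟨1, (e,y)⟩).P.2
      = dist x y
    have hrat : (((1 : NNReal)) : ℝ) / (((1:NNReal) : ℝ) + ((1:NNReal) : ℝ)) = 1/2 := by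
      norm_num
    have hc : (((1 : NNReal) + 1 : NNReal) : ℝ) = 2 := by norm_num
    show (((1 : NNReal) + 1 : NNReal) : ℝ)
      * dist (ccomb Γ x e (1 - (((1:NNReal):ℝ) / (((1:NNReal):ℝ) + ((1:NNReal):ℝ)))))
        (ccomb Γ e y (1 - (((1:NNReal):ℝ) / (((1:NNReal):ℝ) + ((1:NNReal):ℝ))))) = dist x y
    rw [hrat, hc]
    norm_num
    have hey : ccomb Γ e y (1/2) = ccomb Γ y e (1/2) := by
      rw [ccomb_comm hyp half01 e y]
      norm_num
    rw [hey, dist_ccomb_right hyp half01 x y e]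
    ring
  refine ⟨⟨Quotient S⟩, f, ?_, ?_, ?_⟩
  · exact Isometry.of_dist_eq keyiso
  · rintro u ⟨x, rfl⟩ v ⟨y, rfl⟩ α β hα hβ hαβ
    have hβ1 : β ∈ Icc (0:ℝ) 1 := ⟨hβ, by linarith⟩
    rw [show α = 1 - β by linarith]
    rw [key x y β hβ1]
    exact ⟨ccomb Γ x y β, rfl⟩
  · intro x y t ht
    rcases eq_or_ne (dist x y) 0 with hd | hd
    · have hxy : x = y := dist_eq_zero.mp hd
      subst hxy
      have ht0 : t = 0 := le_antisymm (by simpa [hd] using ht.2) ht.1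
      subst ht0
      rw [Γ.source, sub_self, smul_zero, add_zero]
    · have hdpos : 0 < dist x y := lt_of_le_of_ne dist_nonneg (Ne.symm hd)
      set s : ℝ := t / dist x y with hs
      have hsmem : s ∈ Icc (0:ℝ) 1 :=
        ⟨div_nonneg ht.1 dist_nonneg, (div_le_one hdpos).mpr ht.2⟩
      have hγ : Γ.γ x y t = ccomb Γ x y s := by
        show _ = Γ.γ x y (s * dist x y)
        rw [hs, div_mul_cancel₀ _ hd]
      rw [hγ, ← key x y s hsmem]
      rw [smul_sub, sub_smul, one_smul]
      abel

end TPA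
/-- **Three point characterization of affine spaces** (Proposition 3.5): if `X` carries
a bicombing `Γ` such that any three points of `X` are contained in some `Γ`-convex
affine subset, then `(X, Γ)` itself is affine. -/
theorem affine_of_three_point_property {X : Type u} [MetricSpace X] (Γ : Bicombing X)
    (h : ∀ x y z : X, ∃ C : Set X,
      Γ.SegConvex C ∧ Γ.IsAffineOn C ∧ x ∈ C ∧ y ∈ C ∧ z ∈ C) :
    Γ.IsAffine := by
  rcases isEmpty_or_nonempty X with hE | hNE
  · refine ⟨⟨PUnit.{u+1}⟩, fun x => isEmptyElim x, ?_, ?_, ?_⟩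
    · intro x; exact isEmptyElim x
    · rw [Set.range_eq_empty]; exact convex_empty
    · intro x; exact isEmptyElim x
  · obtain ⟨e⟩ := hNE
    exact affine_main Γ h e
end

section
/- Let Y × Ȳ = X = Z × Z̄ be two direct product decompositions of a metric space X. Fix a point x ∈ X and set F_x = Y_x ∩ Z_x. Then for each point p ∈ Ȳ_x and each point q ∈ F_x we have d²(P^Z(p), P^Z(q)) = d²(P^Z(p), P^Z(x)) + d²(P^Z(x), P^Z(q)). -/
universe u

/-! In `X = Y × Ȳ`, the point `x` differs from `p` only in the `Ȳ`-factor and from `q` only in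
the `Y`-factor, so `d²(p, q) = d²(p, x) + d²(x, q)`. Expanding the three distances in
`X = Z × Z̄`, the `Z̄`-components of the two sides cancel because `q` and `x` have the same
`Z̄`-projection, which leaves the same identity for the `Z`-projections. -/

namespace IsProdDecomp

variable {X Y Z : Type*} [MetricSpace X] [MetricSpace Y] [MetricSpace Z] {pY : X → Y} {pZ : X → Z}

theorem dist_sq_of_snd_eq (h : IsProdDecomp pY pZ) {a b : X} (hab : pZ a = pZ b) :
    dist a b ^ 2 = dist (pY a) (pY b) ^ 2 := by
  rw [h.2, hab, dist_self]
  ring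

theorem dist_sq_eq_add_of_fst_eq_of_snd_eq (h : IsProdDecomp pY pZ) {p x q : X}
    (hp : pY p = pY x) (hq : pZ q = pZ x) :
    dist p q ^ 2 = dist p x ^ 2 + dist x q ^ 2 := by
  rw [h.2, h.2 p x, h.2 x q, hp, hq, dist_self, dist_self]
  ring

end IsProdDecomp

/-- **Lemma 2.1**: let `Y × Ȳ = X = Z × Z̄` be two direct product decompositions of a
metric space `X`, let `x ∈ X` and `F_x = Y_x ∩ Z_x`. Then for each `p ∈ Ȳ_x` and each
`q ∈ F_x` one has `d²(P^Z p, P^Z q) = d²(P^Z p, P^Z x) + d²(P^Z x, P^Z q)`. -/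
theorem dist_sq_proj_fiber_intersection {X Y Ybar Z Zbar : Type u}
    [MetricSpace X] [MetricSpace Y] [MetricSpace Ybar] [MetricSpace Z] [MetricSpace Zbar]
    (pY : X → Y) (pYbar : X → Ybar) (pZ : X → Z) (pZbar : X → Zbar)
    (hYY : IsProdDecomp pY pYbar) (hZZ : IsProdDecomp pZ pZbar) (x : X)
    (p : X) (hp : p ∈ fiberThrough pY x)
    (q : X) (hq : q ∈ fiberThrough pYbar x ∩ fiberThrough pZbar x) :
    dist (pZ p) (pZ q) ^ 2 = dist (pZ p) (pZ x) ^ 2 + dist (pZ x) (pZ q) ^ 2 := by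
  obtain ⟨hqY, hqZ⟩ := hq
  have hX := hYY.dist_sq_eq_add_of_fst_eq_of_snd_eq hp hqY
  have hpq := hZZ.2 p q
  have hpx := hZZ.2 p x
  have hxq := hZZ.dist_sq_of_snd_eq hqZ.symm
  rw [hqZ] at hpq
  linarith
end

section
/- Let X be a geodesic metric space with two direct product decompositions Y × Ȳ = X = Z × Z̄. Let x ∈ X be a point, set F_x = Y_x ∩ Z_x, and let T = P^Y(F_x) × Ȳ ⊂ Y × Ȳ = X. Then the image P^Z(T) ⊂ Z splits as a direct product P^Z(T) = P^Z(F_x) × P^Z(Ȳ_x). -/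
universe u

/-! In `Y × Ȳ` the points `x`, `f ∈ F_x`, `u ∈ Ȳ_x` and `w = (P^Y f, P^Ȳ u)` are the corners of a
rectangle, so `d(q,x)² + d(q,w)² = d(q,f)² + d(q,u)²` for every `q ∈ X`. Reading this identity in
`Z × Z̄` at `q = u` and at `q = (P^Z u, P^Z̄ w)` gives `P^Z̄ w = P^Z̄ u`; computing `d(w,w')²` in both
decompositions then yields `d(P^Z w, P^Z w')² = d(P^Z f, P^Z f')² + d(P^Z u, P^Z u')²`, so
`(P^Z f, P^Z u) ↦ P^Z w` is the splitting. -/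

section ProductDecomposition

variable {X Y Ybar Z Zbar : Type*} [MetricSpace X] [MetricSpace Y] [MetricSpace Ybar]
  [MetricSpace Z] [MetricSpace Zbar] {pY : X → Y} {pYbar : X → Ybar} {pZ : X → Z}
  {pZbar : X → Zbar}

theorem IsProdDecomp.exists_proj_eq (h : IsProdDecomp pY pYbar) (y : Y) (ybar : Ybar) :
    ∃ p, pY p = y ∧ pYbar p = ybar := by
  obtain ⟨p, hp⟩ := h.1 (y, ybar)
  exact ⟨p, congrArg Prod.fst hp, congrArg Prod.snd hp⟩

theorem IsProdDecomp.dist_sq_add_dist_sq_of_rectangle (h : IsProdDecomp pY pYbar)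
    {p₀₀ p₀₁ p₁₀ p₁₁ : X} (h₀ : pY p₀₀ = pY p₀₁) (h₁ : pY p₁₀ = pY p₁₁)
    (h₀' : pYbar p₀₀ = pYbar p₁₀) (h₁' : pYbar p₀₁ = pYbar p₁₁) (q : X) :
    dist q p₀₀ ^ 2 + dist q p₁₁ ^ 2 = dist q p₀₁ ^ 2 + dist q p₁₀ ^ 2 := by
  simp only [h.2 q, h₀, h₁, h₀', h₁']
  ring

theorem proj_compl_eq_of_rectangle (hYY : IsProdDecomp pY pYbar)
    (hZZ : IsProdDecomp pZ pZbar) {x f u w : X} (hfYbar : pYbar f = pYbar x)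
    (hfZbar : pZbar f = pZbar x) (hu : pY u = pY x) (hwY : pY w = pY f)
    (hwYbar : pYbar w = pYbar u) : pZbar w = pZbar u := by
  obtain ⟨v, hvZ, hvZbar⟩ := hZZ.exists_proj_eq (pZ u) (pZbar w)
  have rect := hYY.dist_sq_add_dist_sq_of_rectangle hu.symm hwY.symm hfYbar.symm hwYbar.symm
  have at_u := rect u
  have at_v := rect v
  simp only [hZZ.2 u, hZZ.2 v, hfZbar, hvZ, hvZbar, dist_self] at at_u at_v
  have : dist (pZbar u) (pZbar w) ^ 2 = 0 := by
    rw [dist_comm (pZbar w) (pZbar u)] at at_v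
    linarith
  simpa [eq_comm] using this

theorem dist_sq_proj_rectangle (hYY : IsProdDecomp pY pYbar) (hZZ : IsProdDecomp pZ pZbar)
    {x f f' u u' w w' : X} (hf : f ∈ fiberThrough pYbar x ∩ fiberThrough pZbar x)
    (hf' : f' ∈ fiberThrough pYbar x ∩ fiberThrough pZbar x)
    (hu : u ∈ fiberThrough pY x) (hu' : u' ∈ fiberThrough pY x)
    (hw : pY w = pY f ∧ pYbar w = pYbar u) (hw' : pY w' = pY f' ∧ pYbar w' = pYbar u') :
    dist (pZ w) (pZ w') ^ 2 = dist (pZ f) (pZ f') ^ 2 + dist (pZ u) (pZ u') ^ 2 := by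
  have hwZbar := proj_compl_eq_of_rectangle hYY hZZ hf.1 hf.2 hu hw.1 hw.2
  have hwZbar' := proj_compl_eq_of_rectangle hYY hZZ hf'.1 hf'.2 hu' hw'.1 hw'.2
  have hww'Y := hYY.2 w w'
  have hww'Z := hZZ.2 w w'
  have hff'Y := hYY.2 f f'
  have hff'Z := hZZ.2 f f'
  have huu'Y := hYY.2 u u'
  have huu'Z := hZZ.2 u u'
  simp only [hw.1, hw'.1, hw.2, hw'.2, hwZbar, hwZbar'] at hww'Y hww'Z
  simp only [hf.1.trans hf'.1.symm, hf.2.trans hf'.2.symm, hu.trans hu'.symm,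
    dist_self] at hff'Y hff'Z huu'Y
  linarith

theorem proj_rectangle_eq_of_proj_eq (hYY : IsProdDecomp pY pYbar)
    (hZZ : IsProdDecomp pZ pZbar) {x f f' u u' w w' : X}
    (hf : f ∈ fiberThrough pYbar x ∩ fiberThrough pZbar x)
    (hf' : f' ∈ fiberThrough pYbar x ∩ fiberThrough pZbar x)
    (hu : u ∈ fiberThrough pY x) (hu' : u' ∈ fiberThrough pY x)
    (hw : pY w = pY f ∧ pYbar w = pYbar u) (hw' : pY w' = pY f' ∧ pYbar w' = pYbar u')
    (hff' : pZ f = pZ f') (huu' : pZ u = pZ u') :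
    pZ w = pZ w' := by
  have := dist_sq_proj_rectangle hYY hZZ hf hf' hu hu' hw hw'
  rw [hff', huu', dist_self] at this
  simpa using this

end ProductDecomposition

theorem injective_of_dist_sq_eq_add_dist_sq {A B C : Type*} [MetricSpace A] [MetricSpace B]
    [MetricSpace C] {e : A × B → C}
    (he : ∀ p q, dist (e p) (e q) ^ 2 = dist p.1 q.1 ^ 2 + dist p.2 q.2 ^ 2) :
    Function.Injective e := by
  intro p q hpq
  have h := he p q
  rw [hpq, dist_self, zero_pow two_ne_zero, eq_comm,
    add_eq_zero_iff_of_nonneg (by positivity) (by positivity)] at h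
  simp only [ne_eq, OfNat.ofNat_ne_zero, not_false_eq_true, pow_eq_zero_iff, dist_eq_zero] at h
  exact Prod.ext h.1 h.2

theorem proj_of_product_with_fiber_splits_general {X Y Ybar Z Zbar : Type u}
    [MetricSpace X] [MetricSpace Y] [MetricSpace Ybar] [MetricSpace Z] [MetricSpace Zbar]
    (pY : X → Y) (pYbar : X → Ybar) (pZ : X → Z) (pZbar : X → Zbar)
    (hYY : IsProdDecomp pY pYbar) (hZZ : IsProdDecomp pZ pZbar)
    (x : X) :
    ∀ (hz₁ : pZ x ∈ pZ '' (fiberThrough pYbar x ∩ fiberThrough pZbar x))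
      (hz₂ : pZ x ∈ pZ '' fiberThrough pY x),
    ∃ e : ↥(pZ '' (fiberThrough pYbar x ∩ fiberThrough pZbar x)) ×
          ↥(pZ '' fiberThrough pY x) →
          ↥(pZ '' {x' : X |
              pY x' ∈ pY '' (fiberThrough pYbar x ∩ fiberThrough pZbar x)}),
      Function.Bijective e ∧
      (∀ u v, dist (e u) (e v) ^ 2 = dist u.1 v.1 ^ 2 + dist u.2 v.2 ^ 2) ∧
      (∀ a, ((e (a, ⟨pZ x, hz₂⟩) : Z) = (a : Z))) ∧
      (∀ b, ((e (⟨pZ x, hz₁⟩, b) : Z) = (b : Z))) := by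
  intro hz₁ hz₂
  choose f hfF hf using fun a : ↥(pZ '' (fiberThrough pYbar x ∩ fiberThrough pZbar x)) => a.2
  choose u hu hu' using fun b : ↥(pZ '' fiberThrough pY x) => b.2
  choose w hw using fun p q : X => hYY.exists_proj_eq (pY p) (pYbar q)
  let e : ↥(pZ '' (fiberThrough pYbar x ∩ fiberThrough pZbar x)) × ↥(pZ '' fiberThrough pY x) →
      ↥(pZ '' {x' : X | pY x' ∈ pY '' (fiberThrough pYbar x ∩ fiberThrough pZbar x)}) :=
    fun ab => ⟨pZ (w (f ab.1) (u ab.2)), w (f ab.1) (u ab.2),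
      ⟨f ab.1, hfF _, (hw _ _).1.symm⟩, rfl⟩
  have pythagoras : ∀ p q, dist (e p) (e q) ^ 2 = dist p.1 q.1 ^ 2 + dist p.2 q.2 ^ 2 := by
    rintro ⟨a, b⟩ ⟨a', b'⟩
    simpa [Subtype.dist_eq, e, hf, hu'] using
      dist_sq_proj_rectangle hYY hZZ (hfF a) (hfF a') (hu b) (hu b') (hw _ _) (hw _ _)
  refine ⟨e, ⟨injective_of_dist_sq_eq_add_dist_sq pythagoras, ?_⟩, pythagoras, fun a => ?_,
    fun b => ?_⟩
  · rintro ⟨_, s, ⟨g, hgF, hgs⟩, rfl⟩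
    obtain ⟨v, hv⟩ := hYY.exists_proj_eq (pY x) (pYbar s)
    refine ⟨(⟨pZ g, g, hgF, rfl⟩, ⟨pZ v, v, hv.1, rfl⟩), Subtype.ext ?_⟩
    exact proj_rectangle_eq_of_proj_eq hYY hZZ (hfF _) hgF (hu _) hv.1 (hw _ _)
      ⟨hgs.symm, hv.2.symm⟩ (hf _) (hu' _)
  · exact (proj_rectangle_eq_of_proj_eq hYY hZZ (hfF a) (hfF a) (hu _) rfl (hw _ _)
      ⟨rfl, (hfF a).1⟩ rfl (hu' _)).trans (hf a)
  · exact (proj_rectangle_eq_of_proj_eq hYY hZZ (hfF _) ⟨rfl, rfl⟩ (hu b) (hu b) (hw _ _)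
      ⟨hu b, rfl⟩ (hf _) rfl).trans (hu' b)

/-- **Lemma 5.1**: let `X` be a geodesic metric space with two direct product
decompositions `Y × Ȳ = X = Z × Z̄`, let `x ∈ X`, `F_x = Y_x ∩ Z_x` and
`T = P^Y(F_x) × Ȳ ⊆ X`. Then the image `P^Z(T) ⊆ Z` splits as the direct product
`P^Z(T) = P^Z(F_x) × P^Z(Ȳ_x)`, the two factors being the subsets `P^Z(F_x)`
and `P^Z(Ȳ_x)` of `P^Z(T)`, which are the fibers through the point `P^Z(x)`. -/
theorem proj_of_product_with_fiber_splits {X Y Ybar Z Zbar : Type u}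
    [MetricSpace X] [MetricSpace Y] [MetricSpace Ybar] [MetricSpace Z] [MetricSpace Zbar]
    (pY : X → Y) (pYbar : X → Ybar) (pZ : X → Z) (pZbar : X → Zbar)
    (hYY : IsProdDecomp pY pYbar) (hZZ : IsProdDecomp pZ pZbar)
    (hgeo : IsGeodesicSpace X) (x : X) :
    ∀ (hz₁ : pZ x ∈ pZ '' (fiberThrough pYbar x ∩ fiberThrough pZbar x))
      (hz₂ : pZ x ∈ pZ '' fiberThrough pY x),
    ∃ e : ↥(pZ '' (fiberThrough pYbar x ∩ fiberThrough pZbar x)) ×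
          ↥(pZ '' fiberThrough pY x) →
          ↥(pZ '' {x' : X |
              pY x' ∈ pY '' (fiberThrough pYbar x ∩ fiberThrough pZbar x)}),
      Function.Bijective e ∧
      (∀ u v, dist (e u) (e v) ^ 2 = dist u.1 v.1 ^ 2 + dist u.2 v.2 ^ 2) ∧
      (∀ a, ((e (a, ⟨pZ x, hz₂⟩) : Z) = (a : Z))) ∧
      (∀ b, ((e (⟨pZ x, hz₁⟩, b) : Z) = (b : Z))) :=
  proj_of_product_with_fiber_splits_general pY pYbar pZ pZbar hYY hZZ x
end

section
/- Let C be a real Banach space of finite dimension. If C has two decompositions as a direct product of linear subspaces, A × Ā = C = B × B̄, such that A ∩ B = A ∩ B̄ = Ā ∩ B = Ā ∩ B̄ = {0}, then C is a Euclidean space, i.e. its norm is induced by an inner product. -/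
open Module Submodule

section Aux

variable {C : Type*} [NormedAddCommGroup C] [NormedSpace ℝ C] [FiniteDimensional ℝ C]

omit [FiniteDimensional ℝ C] in
/-- Helper: from `p ⊔ q = ⊤`, every vector can be translated into `q` by an element of `p`. -/
private lemma exists_shift (p q : Submodule ℝ C) (htop : p ⊔ q = ⊤) (z : C) :
    ∃ s ∈ p, z + s ∈ q := by
  have hz : z ∈ p ⊔ q := by rw [htop]; trivial
  obtain ⟨u, hu, v, hv, huv⟩ := Submodule.mem_sup.mp hz
  refine ⟨-u, neg_mem hu, ?_⟩
  have : z + -u = v := by rw [← huv]; abel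
  rw [this]; exact hv

set_option maxHeartbeats 1000000 in
/-- Core lemma: the parallelogram law holds on `Abar`. -/
private lemma parallelogram_on_bar
    (A Abar B Bbar : Submodule ℝ C)
    (hA : IsCompl A Abar) (hB : IsCompl B Bbar)
    (hpythA : ∀ a ∈ A, ∀ ab ∈ Abar, ‖a + ab‖ ^ 2 = ‖a‖ ^ 2 + ‖ab‖ ^ 2)
    (hpythB : ∀ b ∈ B, ∀ bb ∈ Bbar, ‖b + bb‖ ^ 2 = ‖b‖ ^ 2 + ‖bb‖ ^ 2)
    (hAB : A ⊓ B = ⊥) (hABbar : A ⊓ Bbar = ⊥)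
    (hAbarB : Abar ⊓ B = ⊥) (hAbarBbar : Abar ⊓ Bbar = ⊥) :
    ∀ w ∈ Abar, ∀ y ∈ Abar,
      ‖w + y‖ ^ 2 + ‖w - y‖ ^ 2 = 2 * ‖w‖ ^ 2 + 2 * ‖y‖ ^ 2 := by
  classical
  set h : C → ℝ := fun x => ‖x‖ ^ 2 with hh
  -- dimension bookkeeping
  have hsum : ∀ p q : Submodule ℝ C, p ⊓ q = ⊥ →
      finrank ℝ p + finrank ℝ q ≤ finrank ℝ C := by
    intro p q hpq
    have h1 := Submodule.finrank_sup_add_finrank_inf_eq p q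
    rw [hpq, finrank_bot, add_zero] at h1
    have h2 : finrank ℝ ↥(p ⊔ q) ≤ finrank ℝ C := Submodule.finrank_le _
    omega
  have hAA : finrank ℝ A + finrank ℝ Abar = finrank ℝ C :=
    Submodule.finrank_add_eq_of_isCompl hA
  have hBB : finrank ℝ B + finrank ℝ Bbar = finrank ℝ C :=
    Submodule.finrank_add_eq_of_isCompl hB
  have d1 := hsum A B hAB
  have d2 := hsum A Bbar hABbar
  have d3 := hsum Abar B hAbarB
  have d4 := hsum Abar Bbar hAbarBbar
  have eAB : finrank ℝ A + finrank ℝ B = finrank ℝ C := by omega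
  have eABbar : finrank ℝ A + finrank ℝ Bbar = finrank ℝ C := by omega
  have eAbarB : finrank ℝ Abar + finrank ℝ B = finrank ℝ C := by omega
  have eAbarBbar : finrank ℝ Abar + finrank ℝ Bbar = finrank ℝ C := by omega
  have eAAbar : finrank ℝ A = finrank ℝ Abar := by omega
  -- sup-top facts
  have tAB : A ⊔ B = ⊤ :=
    Submodule.eq_top_of_disjoint A B eAB.symm.le (disjoint_iff.mpr hAB)
  have tABbar : A ⊔ Bbar = ⊤ :=
    Submodule.eq_top_of_disjoint A Bbar eABbar.symm.le (disjoint_iff.mpr hABbar)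
  have tAbarB : Abar ⊔ B = ⊤ :=
    Submodule.eq_top_of_disjoint Abar B eAbarB.symm.le (disjoint_iff.mpr hAbarB)
  have tAbarBbar : Abar ⊔ Bbar = ⊤ :=
    Submodule.eq_top_of_disjoint Abar Bbar eAbarBbar.symm.le (disjoint_iff.mpr hAbarBbar)
  have cBA : IsCompl B Abar :=
    ⟨(disjoint_iff.mpr hAbarB).symm, codisjoint_iff.mpr (by rw [sup_comm]; exact tAbarB)⟩
  have cBbarA : IsCompl Bbar Abar :=
    ⟨(disjoint_iff.mpr hAbarBbar).symm, codisjoint_iff.mpr (by rw [sup_comm]; exact tAbarBbar)⟩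
  -- section maps
  set sB : C →ₗ[ℝ] C := B.subtype ∘ₗ B.linearProjOfIsCompl Abar cBA with hsB
  set sBb : C →ₗ[ℝ] C := Bbar.subtype ∘ₗ Bbar.linearProjOfIsCompl Abar cBbarA with hsBb
  have sB_mem : ∀ x : C, sB x ∈ B := fun x => (B.linearProjOfIsCompl Abar cBA x).2
  have sBb_mem : ∀ x : C, sBb x ∈ Bbar := fun x => (Bbar.linearProjOfIsCompl Abar cBbarA x).2
  have sB_sub : ∀ x : C, x - sB x ∈ Abar := by
    intro x
    have hx : (B.linearProjOfIsCompl Abar cBA x : C) + (Abar.linearProjOfIsCompl B cBA.symm x : C) = x :=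
      Submodule.projection_add_projection_eq_self cBA x
    set ap := (Abar.linearProjOfIsCompl B cBA.symm x : C) with hap
    set bp := (B.linearProjOfIsCompl Abar cBA x : C) with hbp
    have hb : sB x = bp := rfl
    rw [hb, ← hx]
    have h2 : bp + ap - bp = ap := by abel
    rw [h2]
    exact (Abar.linearProjOfIsCompl B cBA.symm x).2
  have sBb_sub : ∀ x : C, x - sBb x ∈ Abar := by
    intro x
    have hx : (Bbar.linearProjOfIsCompl Abar cBbarA x : C) + (Abar.linearProjOfIsCompl Bbar cBbarA.symm x : C) = x :=
      Submodule.projection_add_projection_eq_self cBbarA x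
    set ap := (Abar.linearProjOfIsCompl Bbar cBbarA.symm x : C) with hap
    set bp := (Bbar.linearProjOfIsCompl Abar cBbarA x : C) with hbp
    have hb : sBb x = bp := rfl
    rw [hb, ← hx]
    have h2 : bp + ap - bp = ap := by abel
    rw [h2]
    exact (Abar.linearProjOfIsCompl Bbar cBbarA.symm x).2
  -- the theta map A → Abar and its surjectivity
  have theta_mem : ∀ a : A, ((sB - sBb) ∘ₗ A.subtype) a ∈ Abar := by
    intro a
    have h1 : (a : C) - sB a ∈ Abar := sB_sub a
    have h2 : (a : C) - sBb a ∈ Abar := sBb_sub a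
    have heq : ((sB - sBb) ∘ₗ A.subtype) a = ((a : C) - sBb a) - ((a : C) - sB a) := by
      have h3 : ((sB - sBb) ∘ₗ A.subtype) a = sB (a : C) - sBb (a : C) := rfl
      rw [h3]; abel
    rw [heq]; exact sub_mem h2 h1
  set Θ : A →ₗ[ℝ] Abar := LinearMap.codRestrict Abar ((sB - sBb) ∘ₗ A.subtype) theta_mem with hΘ
  have Θval : ∀ a : A, (Θ a : C) = sB (a : C) - sBb (a : C) := fun a => rfl
  have Θinj : Function.Injective Θ := by
    rw [← LinearMap.ker_eq_bot, LinearMap.ker_eq_bot']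
    intro a ha
    have ha' : sB (a : C) - sBb (a : C) = 0 := by
      rw [← Θval a, ha]; rfl
    have hmem : sB (a : C) ∈ B ⊓ Bbar := by
      refine ⟨sB_mem a, ?_⟩
      rw [sub_eq_zero] at ha'
      rw [ha']; exact sBb_mem a
    rw [hB.inf_eq_bot] at hmem
    have hB0 : sB (a : C) = 0 := hmem
    have hmem2 : (a : C) ∈ A ⊓ Abar := by
      refine ⟨a.2, ?_⟩
      have := sB_sub (a : C); rw [hB0, sub_zero] at this; exact this
    rw [hA.inf_eq_bot] at hmem2
    exact Subtype.ext hmem2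
  have Θsurj : Function.Surjective Θ :=
    (LinearMap.injective_iff_surjective_of_finrank_eq_finrank eAAbar).mp Θinj
  -- element-level surjectivity of θ
  have Sθ : ∀ e ∈ Abar, ∃ p ∈ A, ∃ x ∈ Abar, ∃ y ∈ Abar,
      p + x ∈ B ∧ p + y ∈ Bbar ∧ x - y = e := by
    intro e he
    obtain ⟨a, ha⟩ := Θsurj ⟨e, he⟩
    have ha' : sB (a : C) - sBb (a : C) = e := by
      rw [← Θval a, ha]
    refine ⟨(a : C), a.2, sB (a : C) - (a : C), ?_, sBb (a : C) - (a : C), ?_, ?_, ?_, ?_⟩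
    · have h1 := sB_sub (a : C)
      have h2 : sB (a : C) - (a : C) = -((a : C) - sB (a : C)) := by abel
      rw [h2]; exact neg_mem h1
    · have h1 := sBb_sub (a : C)
      have h2 : sBb (a : C) - (a : C) = -((a : C) - sBb (a : C)) := by abel
      rw [h2]; exact neg_mem h1
    · have h2 : (a : C) + (sB (a : C) - (a : C)) = sB (a : C) := by abel
      rw [h2]; exact sB_mem _
    · have h2 : (a : C) + (sBb (a : C) - (a : C)) = sBb (a : C) := by abel
      rw [h2]; exact sBb_mem _
    · rw [← ha']; abel
  -- the master functional identity
  have E : ∀ u ∈ A, ∀ p ∈ A, ∀ x ∈ Abar, ∀ y ∈ Abar, p + x ∈ B → (u - p) + y ∈ Bbar →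
      h u + h (x + y) = h p + h x + h (u - p) + h y := by
    intro u hu p hp x hx y hy hbx hby
    have h1 : h ((p + x) + ((u - p) + y)) = h (p + x) + h ((u - p) + y) :=
      hpythB _ hbx _ hby
    have h2 : (p + x) + ((u - p) + y) = u + (x + y) := by abel
    rw [h2] at h1
    have h3 : h (u + (x + y)) = h u + h (x + y) := hpythA u hu _ (add_mem hx hy)
    have h4 : h (p + x) = h p + h x := hpythA p hp x hx
    have h5 : h ((u - p) + y) = h (u - p) + h y := hpythA _ (sub_mem hu hp) y hy
    rw [h3, h4, h5] at h1
    linarith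
  -- second-difference identity
  have E2 : ∀ u ∈ A, ∀ u' ∈ A, ∀ s ∈ A, ∀ p ∈ A,
      ∀ xp ∈ Abar, ∀ yp ∈ Abar, ∀ yu ∈ Abar, ∀ yu' ∈ Abar, ∀ xs ∈ Abar,
      p + xp ∈ B → p + yp ∈ Bbar → u + yu ∈ Bbar → u' + yu' ∈ Bbar → s + xs ∈ B →
      h (u + s) - h u - h (u' + s) + h u' =
        h (yu + (xp - yp)) - h (yu + (xp - yp) + xs)
          - h (yu' + (xp - yp)) + h (yu' + (xp - yp) + xs) := by
    intro u hu u' hu' s hs p hp xp hxp yp hyp yu hyu yu' hyu' xs hxs hBxp hBbyp hBbyu hBbyu' hBxs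
    have mem1 : (u - p) + (yu - yp) ∈ Bbar := by
      have he : (u - p) + (yu - yp) = (u + yu) - (p + yp) := by abel
      rw [he]; exact sub_mem hBbyu hBbyp
    have mem1' : (u' - p) + (yu' - yp) ∈ Bbar := by
      have he : (u' - p) + (yu' - yp) = (u' + yu') - (p + yp) := by abel
      rw [he]; exact sub_mem hBbyu' hBbyp
    have mem2 : (p + s) + (xp + xs) ∈ B := by
      have he : (p + s) + (xp + xs) = (p + xp) + (s + xs) := by abel
      rw [he]; exact add_mem hBxp hBxs
    have mem3 : ((u + s) - (p + s)) + (yu - yp) ∈ Bbar := by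
      have he : ((u + s) - (p + s)) + (yu - yp) = (u + yu) - (p + yp) := by abel
      rw [he]; exact sub_mem hBbyu hBbyp
    have mem3' : ((u' + s) - (p + s)) + (yu' - yp) ∈ Bbar := by
      have he : ((u' + s) - (p + s)) + (yu' - yp) = (u' + yu') - (p + yp) := by abel
      rw [he]; exact sub_mem hBbyu' hBbyp
    have e1 := E u hu p hp xp hxp (yu - yp) (sub_mem hyu hyp) hBxp mem1
    have e2 := E (u + s) (add_mem hu hs) (p + s) (add_mem hp hs) (xp + xs)
      (add_mem hxp hxs) (yu - yp) (sub_mem hyu hyp) mem2 mem3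
    have e3 := E u' hu' p hp xp hxp (yu' - yp) (sub_mem hyu' hyp) hBxp mem1'
    have e4 := E (u' + s) (add_mem hu' hs) (p + s) (add_mem hp hs) (xp + xs)
      (add_mem hxp hxs) (yu' - yp) (sub_mem hyu' hyp) mem2 mem3'
    rw [show xp + (yu - yp) = yu + (xp - yp) from by abel] at e1
    rw [show xp + (yu' - yp) = yu' + (xp - yp) from by abel] at e3
    rw [show (xp + xs) + (yu - yp) = yu + (xp - yp) + xs from by abel,
        show (u + s) - (p + s) = u - p from by abel] at e2
    rw [show (xp + xs) + (yu' - yp) = yu' + (xp - yp) + xs from by abel,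
        show (u' + s) - (p + s) = u' - p from by abel] at e4
    linarith
  -- conclusion
  intro w hw y hy
  obtain ⟨u, hu, hBbu⟩ := exists_shift A Bbar tABbar y
  rw [add_comm] at hBbu
  obtain ⟨s, hs, hBs⟩ := exists_shift A B tAB (-y)
  rw [add_comm] at hBs
  obtain ⟨p, hp, xp, hxp, yp, hyp, hBp, hBbp, hxyp⟩ := Sθ w hw
  have z0A : (0 : C) ∈ A := A.zero_mem
  have z0Abar : (0 : C) ∈ Abar := Abar.zero_mem
  have hBb00 : (0 : C) + (0 : C) ∈ Bbar := by rw [add_zero]; exact Bbar.zero_mem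
  have hB00 : (0 : C) + (0 : C) ∈ B := by rw [add_zero]; exact B.zero_mem
  have I1 := E2 u hu 0 z0A s hs p hp xp hxp yp hyp y hy 0 z0Abar (-y) (neg_mem hy)
    hBp hBbp hBbu hBb00 hBs
  have I2 := E2 u hu 0 z0A s hs 0 z0A 0 z0Abar 0 z0Abar y hy 0 z0Abar (-y) (neg_mem hy)
    hB00 hBb00 hBbu hBb00 hBs
  rw [hxyp] at I1
  rw [show y + w + -y = w from by abel,
      show (0 : C) + w + -y = w - y from by abel,
      show (0 : C) + w = w from by abel] at I1
  rw [show y + ((0 : C) - 0) + -y = (0 : C) from by abel,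
      show y + ((0 : C) - 0) = y from by abel,
      show (0 : C) + ((0 : C) - 0) + -y = -y from by abel,
      show (0 : C) + ((0 : C) - 0) = (0 : C) from by abel] at I2
  have h0 : h 0 = 0 := by simp [hh]
  have hneg : h (-y) = h y := by simp [hh]
  have hcomm : h (w + y) = h (y + w) := by rw [add_comm]
  show h (w + y) + h (w - y) = 2 * h w + 2 * h y
  rw [hcomm]
  rw [h0, hneg] at I2
  linarith
end Aux

/-- **Claim 7.1**: let `C` be a finite-dimensional real Banach space with two
decompositions as a direct product of linear subspaces, `A × Ā = C = B × B̄`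
(i.e. `C = A ⊕ Ā` with `‖a + ā‖² = ‖a‖² + ‖ā‖²`, and likewise for `B, B̄`), such that
`A ∩ B = A ∩ B̄ = Ā ∩ B = Ā ∩ B̄ = {0}`. Then `C` is a Euclidean space, i.e. its norm
is induced by an inner product. -/
theorem euclidean_of_transversal_decompositions {C : Type*} [NormedAddCommGroup C]
    [NormedSpace ℝ C] [FiniteDimensional ℝ C]
    (A Abar B Bbar : Submodule ℝ C)
    (hA : IsCompl A Abar) (hB : IsCompl B Bbar)
    (hpythA : ∀ a ∈ A, ∀ abar ∈ Abar, ‖a + abar‖ ^ 2 = ‖a‖ ^ 2 + ‖abar‖ ^ 2)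
    (hpythB : ∀ b ∈ B, ∀ bbar ∈ Bbar, ‖b + bbar‖ ^ 2 = ‖b‖ ^ 2 + ‖bbar‖ ^ 2)
    (hAB : A ⊓ B = ⊥) (hABbar : A ⊓ Bbar = ⊥)
    (hAbarB : Abar ⊓ B = ⊥) (hAbarBbar : Abar ⊓ Bbar = ⊥) :
    Nonempty (InnerProductSpace ℝ C) := by
  have P1 := parallelogram_on_bar A Abar B Bbar hA hB hpythA hpythB
    hAB hABbar hAbarB hAbarBbar
  have hpythA' : ∀ ab ∈ Abar, ∀ a ∈ A, ‖ab + a‖ ^ 2 = ‖ab‖ ^ 2 + ‖a‖ ^ 2 := by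
    intro ab hab a ha
    rw [add_comm, hpythA a ha ab hab]; ring
  have P2 := parallelogram_on_bar Abar A B Bbar hA.symm hB hpythA' hpythB
    hAbarB hAbarBbar hAB hABbar
  have par : ∀ x y : C, ‖x + y‖ ^ 2 + ‖x - y‖ ^ 2 = 2 * ‖x‖ ^ 2 + 2 * ‖y‖ ^ 2 := by
    intro x y
    have hx : x ∈ A ⊔ Abar := by rw [hA.codisjoint.eq_top]; trivial
    have hy : y ∈ A ⊔ Abar := by rw [hA.codisjoint.eq_top]; trivial
    obtain ⟨a1, ha1, b1, hb1, hx1⟩ := Submodule.mem_sup.mp hx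
    obtain ⟨a2, ha2, b2, hb2, hy1⟩ := Submodule.mem_sup.mp hy
    have e1 : x + y = (a1 + a2) + (b1 + b2) := by rw [← hx1, ← hy1]; abel
    have e2 : x - y = (a1 - a2) + (b1 - b2) := by rw [← hx1, ← hy1]; abel
    rw [e1, e2, ← hx1, ← hy1]
    rw [hpythA _ (add_mem ha1 ha2) _ (add_mem hb1 hb2),
        hpythA _ (sub_mem ha1 ha2) _ (sub_mem hb1 hb2),
        hpythA _ ha1 _ hb1, hpythA _ ha2 _ hb2]
    have q1 := P2 a1 ha1 a2 ha2
    have q2 := P1 b1 hb1 b2 hb2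
    linarith
  have par' : ∀ x y : C, ‖x + y‖ * ‖x + y‖ + ‖x - y‖ * ‖x - y‖
      = 2 * (‖x‖ * ‖x‖ + ‖y‖ * ‖y‖) := by
    intro x y
    have hp := par x y
    simp only [← pow_two]
    linarith
  exact ⟨InnerProductSpace.ofNorm (𝕜 := ℝ) (E := C) par'⟩
end

section
/- Let C be a real Banach space of finite dimension with two decompositions as a direct product of linear subspaces, A × Ā = C = B × B̄, such that A ∩ B = A ∩ B̄ = Ā ∩ B = Ā ∩ B̄ = {0} and A ≠ {0}. Let P^A : B → A be the restriction to B of the linear projection of C onto A with kernel Ā, and let P^B : A → B be the restriction to A of the linear projection of C onto B with kernel B̄; both are bijective. Then the composition Q = P^A ∘ P^B : A → A has a (real) eigenvector. -/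
set_option linter.unusedSectionVars false
set_option linter.unusedVariables false
set_option maxHeartbeats 1000000

open Submodule Module

namespace Lemma72


variable {C : Type*} [NormedAddCommGroup C] [NormedSpace ℝ C]

/-- The second mixed difference of the function `x ↦ ‖x‖ ^ 2`. -/
noncomputable def Fq (u v x : C) : ℝ :=
  ‖x + u + v‖ ^ 2 - ‖x + u‖ ^ 2 - ‖x + v‖ ^ 2 + ‖x‖ ^ 2


lemma Fq_base (x y : C) : Fq x y 0 = ‖x + y‖ ^ 2 - ‖x‖ ^ 2 - ‖y‖ ^ 2 := by
  unfold Fq; rw [zero_add, zero_add, norm_zero]; ring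

lemma Fq_symm (u v x : C) : Fq u v x = Fq v u x := by
  unfold Fq
  rw [add_right_comm x v u]
  ring

lemma Fq_cocycle (u u' v x : C) : Fq (u + u') v x = Fq u v (x + u') + Fq u' v x := by
  unfold Fq
  have h1 : x + u' + u + v = x + (u + u') + v := by abel
  have h2 : x + u' + u = x + (u + u') := by abel
  rw [h1, h2]
  ring

lemma Fq_neg (u v x : C) : Fq u v (-x - u - v) = Fq u v x := by
  unfold Fq
  have e1 : -x - u - v + u + v = -x := by abel
  have e2 : -x - u - v + u = -(x + v) := by abel
  have e3 : -x - u - v + v = -(x + u) := by abel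
  have e4 : -x - u - v = -(x + u + v) := by abel
  rw [e1, e2, e3, e4, norm_neg, norm_neg, norm_neg, norm_neg]
  ring

lemma Fq_inv (u v w x : C) (h : ∀ y, Fq u w y = 0) : Fq u v (x + w) = Fq u v x := by
  have key : Fq u v (x + w) - Fq u v x = Fq u w (x + v) - Fq u w x := by
    unfold Fq
    have e1 : x + w + u + v = x + v + u + w := by abel
    have e2 : x + w + u = x + u + w := by abel
    have e3 : x + w + v = x + v + w := by abel
    have e4 : x + v + u = x + u + v := by abel
    rw [e1, e2, e3, e4]
    ring
  have h1 := h (x + v)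
  have h2 := h x
  linarith

lemma Fq_zero {U V : Submodule ℝ C} (hUV : IsCompl U V)
    (hp : ∀ a ∈ U, ∀ v ∈ V, ‖a + v‖ ^ 2 = ‖a‖ ^ 2 + ‖v‖ ^ 2)
    {u v : C} (hu : u ∈ U) (hv : v ∈ V) (x : C) : Fq u v x = 0 := by
  obtain ⟨xa, hxa, xb, hxb, rfl⟩ : ∃ xa ∈ U, ∃ xb ∈ V, x = xa + xb :=
    ⟨U.linearProjOfIsCompl V hUV x, Subtype.coe_prop _,
      V.linearProjOfIsCompl U hUV.symm x, Subtype.coe_prop _,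
      (Submodule.projection_add_projection_eq_self hUV x).symm⟩
  unfold Fq
  have e1 : xa + xb + u + v = (xa + u) + (xb + v) := by abel
  have e2 : xa + xb + u = (xa + u) + xb := by abel
  have e3 : xa + xb + v = xa + (xb + v) := by abel
  rw [e1, e2, e3, hp _ (U.add_mem hxa hu) _ (V.add_mem hxb hv),
    hp _ (U.add_mem hxa hu) _ hxb, hp _ hxa _ (V.add_mem hxb hv), hp _ hxa _ hxb]
  ring

/-- The key step: `x ↦ Fq a a' x` is constant, for `a, a'` in a subspace `V`-"orthogonal"
to everything, given a second decomposition `B ⊕ Bbar` in general position. -/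
lemma Fq_const_on (B Bbar V : Submodule ℝ C) (a a' : C)
    (hzB : ∀ p ∈ B, ∀ q ∈ Bbar, ∀ x : C, Fq p q x = 0)
    (hdecB : ∀ x : C, ∃ p ∈ B, ∃ q ∈ Bbar, x = p + q)
    (hza : ∀ v ∈ V, ∀ x : C, Fq a v x = 0)
    (hza' : ∀ v ∈ V, ∀ x : C, Fq a' v x = 0)
    (hs1 : ∀ p ∈ B, ∃ v ∈ V, ∃ q ∈ Bbar, v = p + q)
    (hs2 : ∀ q ∈ Bbar, ∃ v ∈ V, ∃ p ∈ B, v = q + p) (x : C) :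
    Fq a a' x = Fq a a' 0 := by
  obtain ⟨b, hb, bb, hbb, hae⟩ := hdecB a
  obtain ⟨b', hb', bb', hbb', hae'⟩ := hdecB a'
  set c := bb + bb' with hc
  have invbb' : ∀ x : C, ∀ q ∈ Bbar, Fq b b' (x + q) = Fq b b' x := fun x q hq =>
    Fq_inv b b' q x (hzB b hb q hq)
  have invbbbar : ∀ x : C, ∀ p ∈ B, Fq bb bb' (x + p) = Fq bb bb' x := fun x p hp =>
    Fq_inv bb bb' p x (fun y => (Fq_symm bb p y).trans (hzB p hp bb hbb y))
  have hG : ∀ x : C, Fq a a' x = Fq b b' (x + c) + Fq bb bb' x := by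
    intro x
    have h1 : Fq a a' x = Fq b a' (x + bb) + Fq bb a' x := by
      rw [hae]; exact Fq_cocycle b bb a' x
    have h2 : Fq b a' (x + bb) = Fq b b' (x + c) := by
      have e : x + bb + bb' = x + c := by rw [hc]; abel
      rw [Fq_symm b a' (x + bb), hae', Fq_cocycle b' bb' b (x + bb),
        Fq_symm bb' b (x + bb), hzB b hb bb' hbb' (x + bb), Fq_symm b' b, e, add_zero]
    have h3 : Fq bb a' x = Fq bb bb' x := by
      rw [Fq_symm bb a' x, hae', Fq_cocycle b' bb' bb x, hzB b' hb' bb hbb (x + bb'),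
        Fq_symm bb' bb x, zero_add]
    rw [h1, h2, h3]
  have hGinv : ∀ x : C, ∀ v ∈ V, Fq a a' (x + v) = Fq a a' x := fun x v hv =>
    Fq_inv a a' v x (hza v hv)
  have key : ∀ p ∈ B, ∀ q ∈ Bbar, (p + q) ∈ V → ∀ x : C,
      Fq b b' (x + c + p) - Fq b b' (x + c) + (Fq bb bb' (x + q) - Fq bb bb' x) = 0 := by
    intro p hp q hq hv x
    have h0 := hGinv x (p + q) hv
    rw [hG (x + (p + q)), hG x] at h0
    have e1 : x + (p + q) + c = (x + c + p) + q := by abel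
    have e2 : x + (p + q) = (x + q) + p := by abel
    rw [e1, invbb' _ q hq, e2, invbbbar _ p hp] at h0
    linarith
  have D1 : ∀ p ∈ B, ∀ x : C, Fq b b' (x + p) - Fq b b' x = Fq b b' p - Fq b b' 0 := by
    intro p hp x
    obtain ⟨v, hv, q, hq, hvpq⟩ := hs1 p hp
    have hvmem : p + q ∈ V := hvpq ▸ hv
    have claim : ∀ z ∈ B, Fq b b' (z + p) - Fq b b' z
        = -(Fq bb bb' (-c + q) - Fq bb bb' (-c)) := by
      intro z hz
      have h0 := key p hp q hq hvmem (z - c)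
      have e1 : z - c + c = z := by abel
      have e2 : z - c + q = (-c + q) + z := by abel
      have e3 : z - c = (-c) + z := by abel
      rw [e1, e2, invbbbar _ z hz, e3, invbbbar _ z hz] at h0
      linarith
    obtain ⟨xp, hxp, xq, hxq, hxe⟩ := hdecB x
    have l1 : Fq b b' (x + p) = Fq b b' (xp + p) := by
      have e : x + p = (xp + p) + xq := by rw [hxe]; abel
      rw [e, invbb' _ xq hxq]
    have l2 : Fq b b' x = Fq b b' xp := by
      rw [hxe]; exact invbb' _ xq hxq
    have c1 := claim xp hxp
    have c2 := claim 0 (Submodule.zero_mem B)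
    rw [zero_add] at c2
    rw [l1, l2]
    linarith
  have D2 : ∀ q ∈ Bbar, ∀ x : C, Fq bb bb' (x + q) - Fq bb bb' x = Fq bb bb' q - Fq bb bb' 0 := by
    intro q hq x
    obtain ⟨v, hv, p, hp, hvqp⟩ := hs2 q hq
    have hvmem : p + q ∈ V := by
      have e : p + q = v := by rw [hvqp]; abel
      rw [e]; exact hv
    have claim : ∀ z ∈ Bbar, Fq bb bb' (z + q) - Fq bb bb' z
        = -(Fq b b' p - Fq b b' 0) := by
      intro z hz
      have h0 := key p hp q hq hvmem z
      have e1 : z + c + p = p + (z + c) := by abel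
      have e2 : z + c = 0 + (z + c) := by abel
      have hzc : z + c ∈ Bbar := Bbar.add_mem hz (Bbar.add_mem hbb hbb')
      rw [e1, invbb' _ _ hzc, e2, invbb' _ _ hzc] at h0
      linarith
    obtain ⟨xp, hxp, xq, hxq, hxe⟩ := hdecB x
    have l1 : Fq bb bb' (x + q) = Fq bb bb' (xq + q) := by
      have e : x + q = (xq + q) + xp := by rw [hxe]; abel
      rw [e, invbbbar _ xp hxp]
    have l2 : Fq bb bb' x = Fq bb bb' xq := by
      have e : x = xq + xp := by rw [hxe]; abel
      rw [e]; exact invbbbar _ xp hxp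
    have c1 := claim xq hxq
    have c2 := claim 0 (Submodule.zero_mem Bbar)
    rw [zero_add] at c2
    rw [l1, l2]
    linarith
  have hm : ∀ w x : C, Fq a a' (x + w) - Fq a a' x = Fq a a' w - Fq a a' 0 := by
    intro w x
    obtain ⟨p, hp, q, hq, hwe⟩ := hdecB w
    have gen : ∀ z : C, Fq a a' (z + w) - Fq a a' z =
        (Fq b b' p - Fq b b' 0) + (Fq bb bb' q - Fq bb bb' 0) := by
      intro z
      rw [hG (z + w), hG z]
      have e1 : z + w + c = (z + c + p) + q := by rw [hwe]; abel
      have e2 : z + w = (z + q) + p := by rw [hwe]; abel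
      rw [e1, invbb' _ q hq, e2, invbbbar _ p hp]
      have d1 := D1 p hp (z + c)
      have d2 := D2 q hq z
      linarith
    have g1 := gen x
    have g2 := gen 0
    rw [zero_add] at g2
    linarith
  have madd : ∀ w w' : C, Fq a a' (w + w') - Fq a a' 0 =
      (Fq a a' w - Fq a a' 0) + (Fq a a' w' - Fq a a' 0) := by
    intro w w'
    have h1 := hm w w'
    have e : w' + w = w + w' := by abel
    rw [e] at h1
    linarith
  have hneg : ∀ w : C, Fq a a' (-w) - Fq a a' 0 = -(Fq a a' w - Fq a a' 0) := by
    intro w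
    have h1 := madd w (-w)
    rw [add_neg_cancel] at h1
    linarith
  have h2m : ∀ z : C, 2 * (Fq a a' z - Fq a a' 0) = Fq a a' (-a - a') - Fq a a' 0 := by
    intro z
    have h1 : Fq a a' z - Fq a a' 0 = Fq a a' (-z - a - a') - Fq a a' 0 := by
      rw [Fq_neg a a' z]
    have e : -z - a - a' = (-z) + (-a - a') := by abel
    rw [e, madd (-z) (-a - a'), hneg z] at h1
    linarith
  have hk := h2m 0
  rw [sub_self, mul_zero] at hk
  have hfin := h2m x
  rw [← hk] at hfin
  linarith

variable [FiniteDimensional ℝ C]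

lemma proj_comp_subtype_injective (U W Wc : Submodule ℝ C) (hW : IsCompl W Wc)
    (hker : U ⊓ Wc = ⊥) :
    Function.Injective ((W.linearProjOfIsCompl Wc hW).comp U.subtype) := by
  rw [← LinearMap.ker_eq_bot, eq_bot_iff]
  rintro u hu
  have h1 : (u : C) ∈ Wc := by
    have := LinearMap.mem_ker.mp hu
    rw [LinearMap.comp_apply] at this
    exact (Submodule.linearProjOfIsCompl_apply_eq_zero_iff hW).mp this
  have h2 : (u : C) ∈ U ⊓ Wc := ⟨u.2, h1⟩
  rw [hker, Submodule.mem_bot] at h2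
  simpa [Submodule.mem_bot] using Subtype.ext h2

lemma rank_le_of_inf_bot (U W Wc : Submodule ℝ C) (hW : IsCompl W Wc) (hker : U ⊓ Wc = ⊥) :
    finrank ℝ U ≤ finrank ℝ W :=
  LinearMap.finrank_le_finrank_of_injective (proj_comp_subtype_injective U W Wc hW hker)

lemma surj_of_rank_eq (U W Wc : Submodule ℝ C) (hW : IsCompl W Wc) (hker : U ⊓ Wc = ⊥)
    (hrank : finrank ℝ U = finrank ℝ W) :
    ∀ p ∈ W, ∃ v ∈ U, ∃ q ∈ Wc, v = p + q := by
  have hsurj : Function.Surjective ((W.linearProjOfIsCompl Wc hW).comp U.subtype) :=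
    (LinearMap.injective_iff_surjective_of_finrank_eq_finrank hrank).mp
      (proj_comp_subtype_injective U W Wc hW hker)
  intro p hp
  obtain ⟨u, hu⟩ := hsurj ⟨p, hp⟩
  have hup : (W.linearProjOfIsCompl Wc hW (u : C) : C) = p := by
    rw [show W.linearProjOfIsCompl Wc hW (u : C)
        = ((W.linearProjOfIsCompl Wc hW).comp U.subtype) u from rfl, hu]
  have h2 : ((W.linearProjOfIsCompl Wc hW (u : C)) : C) + (Wc.linearProjOfIsCompl W hW.symm (u : C) : C) = u :=
    Submodule.projection_add_projection_eq_self hW (u : C)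
  refine ⟨u, u.2, (u : C) - p, ?_, by abel⟩
  rw [hup] at h2
  have e : (u : C) - p = (Wc.linearProjOfIsCompl W hW.symm (u : C) : C) :=
    sub_eq_of_eq_add' h2.symm
  rw [e]
  exact Subtype.coe_prop _

lemma Fq_const (A Abar B Bbar : Submodule ℝ C)
    (hA : IsCompl A Abar) (hB : IsCompl B Bbar)
    (hpythA : ∀ a ∈ A, ∀ abar ∈ Abar, ‖a + abar‖ ^ 2 = ‖a‖ ^ 2 + ‖abar‖ ^ 2)
    (hpythB : ∀ b ∈ B, ∀ bbar ∈ Bbar, ‖b + bbar‖ ^ 2 = ‖b‖ ^ 2 + ‖bbar‖ ^ 2)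
    (hAB : A ⊓ B = ⊥) (hABbar : A ⊓ Bbar = ⊥)
    (hAbarB : Abar ⊓ B = ⊥) (hAbarBbar : Abar ⊓ Bbar = ⊥) :
    ∀ u v x : C, Fq u v x = Fq u v 0 := by
  have hzB : ∀ p ∈ B, ∀ q ∈ Bbar, ∀ x : C, Fq p q x = 0 := fun p hp q hq x =>
    Fq_zero hB hpythB hp hq x
  have hzA : ∀ p ∈ A, ∀ q ∈ Abar, ∀ x : C, Fq p q x = 0 := fun p hp q hq x =>
    Fq_zero hA hpythA hp hq x
  have hdec : ∀ (W Wc : Submodule ℝ C), IsCompl W Wc → ∀ x : C,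
      ∃ p ∈ W, ∃ q ∈ Wc, x = p + q := fun W Wc h x =>
    ⟨W.linearProjOfIsCompl Wc h x, Subtype.coe_prop _,
      Wc.linearProjOfIsCompl W h.symm x, Subtype.coe_prop _,
      (Submodule.projection_add_projection_eq_self h x).symm⟩
  have hBA : B ⊓ A = ⊥ := by rw [inf_comm]; exact hAB
  have hBAbar : B ⊓ Abar = ⊥ := by rw [inf_comm]; exact hAbarB
  have hBbarA : Bbar ⊓ A = ⊥ := by rw [inf_comm]; exact hABbar
  have hBbarAbar : Bbar ⊓ Abar = ⊥ := by rw [inf_comm]; exact hAbarBbar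
  have r1 : finrank ℝ Abar = finrank ℝ B :=
    le_antisymm (rank_le_of_inf_bot Abar B Bbar hB hAbarBbar)
      (rank_le_of_inf_bot B Abar A hA.symm hBA)
  have r2 : finrank ℝ Abar = finrank ℝ Bbar :=
    le_antisymm (rank_le_of_inf_bot Abar Bbar B hB.symm hAbarB)
      (rank_le_of_inf_bot Bbar Abar A hA.symm hBbarA)
  have r3 : finrank ℝ A = finrank ℝ B :=
    le_antisymm (rank_le_of_inf_bot A B Bbar hB hABbar)
      (rank_le_of_inf_bot B A Abar hA hBAbar)
  have r4 : finrank ℝ A = finrank ℝ Bbar :=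
    le_antisymm (rank_le_of_inf_bot A Bbar B hB.symm hAB)
      (rank_le_of_inf_bot Bbar A Abar hA hBbarAbar)
  have constA : ∀ a ∈ A, ∀ a' ∈ A, ∀ x : C, Fq a a' x = Fq a a' 0 := by
    intro a ha a' ha' x
    exact Fq_const_on B Bbar Abar a a' hzB (hdec B Bbar hB)
      (fun v hv y => Fq_zero hA hpythA ha hv y)
      (fun v hv y => Fq_zero hA hpythA ha' hv y)
      (surj_of_rank_eq Abar B Bbar hB hAbarBbar r1)
      (surj_of_rank_eq Abar Bbar B hB.symm hAbarB r2) x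
  have hpythA' : ∀ abar ∈ Abar, ∀ a ∈ A, ‖abar + a‖ ^ 2 = ‖abar‖ ^ 2 + ‖a‖ ^ 2 := by
    intro abar habar a ha
    rw [add_comm abar a, hpythA a ha abar habar, add_comm]
  have constAbar : ∀ a ∈ Abar, ∀ a' ∈ Abar, ∀ x : C, Fq a a' x = Fq a a' 0 := by
    intro a ha a' ha' x
    exact Fq_const_on B Bbar A a a' hzB (hdec B Bbar hB)
      (fun v hv y => Fq_zero hA.symm hpythA' ha hv y)
      (fun v hv y => Fq_zero hA.symm hpythA' ha' hv y)
      (surj_of_rank_eq A B Bbar hB hABbar r3)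
      (surj_of_rank_eq A Bbar B hB.symm hAB r4) x
  intro u v x
  obtain ⟨uA, huA, uB, huB, hue⟩ := hdec A Abar hA u
  obtain ⟨vA, hvA, vB, hvB, hve⟩ := hdec A Abar hA v
  have t1 : ∀ y : C, Fq uA v y = Fq uA vA 0 := by
    intro y
    rw [Fq_symm uA v y, hve, Fq_cocycle vA vB uA y, Fq_symm vB uA y, hzA uA huA vB hvB y,
      add_zero, Fq_symm vA uA (y + vB), constA uA huA vA hvA (y + vB)]
  have t2 : ∀ y : C, Fq uB v y = Fq uB vB 0 := by
    intro y
    rw [Fq_symm uB v y, hve, Fq_cocycle vA vB uB y, hzA vA hvA uB huB (y + vB),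
      zero_add, Fq_symm vB uB y, constAbar uB huB vB hvB y]
  have split : ∀ z : C, Fq u v z = Fq uA vA 0 + Fq uB vB 0 := by
    intro z
    rw [hue, Fq_cocycle uA uB v z, t1 (z + uB), t2 z]
  rw [split x, split 0]

end Lemma72

open Lemma72 in
/-- **Lemma 7.2**: let `C` be a finite-dimensional real Banach space with two
decompositions as a direct product of linear subspaces, `A × Ā = C = B × B̄`
(i.e. `C = A ⊕ Ā` with `‖a + ā‖² = ‖a‖² + ‖ā‖²`, and likewise for `B, B̄`), such that
`A ∩ B = A ∩ B̄ = Ā ∩ B = Ā ∩ B̄ = {0}` and `A ≠ {0}`. Let `P^A : B → A` and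
`P^B : A → B` be the (bijective) restrictions of the linear projections of `C` onto
`A` with kernel `Ā` and onto `B` with kernel `B̄`. Then the composition
`Q = P^A ∘ P^B : A → A` has a real eigenvector. -/
theorem projection_composition_has_eigenvector {C : Type*} [NormedAddCommGroup C]
    [NormedSpace ℝ C] [FiniteDimensional ℝ C]
    (A Abar B Bbar : Submodule ℝ C)
    (hA : IsCompl A Abar) (hB : IsCompl B Bbar)
    (hpythA : ∀ a ∈ A, ∀ abar ∈ Abar, ‖a + abar‖ ^ 2 = ‖a‖ ^ 2 + ‖abar‖ ^ 2)
    (hpythB : ∀ b ∈ B, ∀ bbar ∈ Bbar, ‖b + bbar‖ ^ 2 = ‖b‖ ^ 2 + ‖bbar‖ ^ 2)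
    (hAB : A ⊓ B = ⊥) (hABbar : A ⊓ Bbar = ⊥)
    (hAbarB : Abar ⊓ B = ⊥) (hAbarBbar : Abar ⊓ Bbar = ⊥)
    (hAne : A ≠ ⊥) :
    ∃ (a : A) (lam : ℝ), a ≠ 0 ∧
      A.linearProjOfIsCompl Abar hA ↑(B.linearProjOfIsCompl Bbar hB ↑a) = lam • a := by
  have hconst := Fq_const A Abar B Bbar hA hB hpythA hpythB hAB hABbar hAbarB hAbarBbar
  have hFadd : ∀ x y z : C, Fq (x + y) z 0 = Fq x z 0 + Fq y z 0 := by
    intro x y z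
    rw [Fq_cocycle x y z 0, hconst x z (0 + y)]
  have hcont : ∀ z : C, Continuous fun x : C => Fq x z 0 / 2 := by
    intro z
    unfold Fq
    fun_prop
  letI instIPS : InnerProductSpace ℝ C :=
    { toNormedSpace := inferInstance
      inner := fun x y => Fq x y 0 / 2
      norm_sq_eq_re_inner := by
        intro x
        have hx : ‖x + x‖ = 2 * ‖x‖ := by
          rw [show x + x = (2 : ℝ) • x from (two_smul ℝ x).symm, norm_smul]
          simp
        show ‖x‖ ^ 2 = RCLike.re (Fq x x 0 / 2)
        rw [Fq_base, hx]
        simp only [RCLike.re_to_real]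
        ring
      conj_inner_symm := by
        intro x y
        show (starRingEnd ℝ) (Fq y x 0 / 2) = Fq x y 0 / 2
        rw [Fq_symm y x 0]
        simp
      add_left := by
        intro x y z
        show Fq (x + y) z 0 / 2 = Fq x z 0 / 2 + Fq y z 0 / 2
        rw [hFadd]; ring
      smul_left := by
        intro x y r
        show Fq (r • x) y 0 / 2 = (starRingEnd ℝ) r * (Fq x y 0 / 2)
        have hms := map_real_smul
          (AddMonoidHom.mk' (fun x : C => Fq x y 0 / 2) (fun a b => by
            show Fq (a + b) y 0 / 2 = Fq a y 0 / 2 + Fq b y 0 / 2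
            rw [hFadd]; ring))
          (hcont y) r x
        simpa using hms }
  haveI : Nontrivial (↥A) := Submodule.nontrivial_iff_ne_bot.mpr hAne
  have hoA : ∀ u, u ∈ A → ∀ v, v ∈ Abar → (inner ℝ u v : ℝ) = 0 := by
    intro u hu v hv
    show Fq u v 0 / 2 = 0
    rw [Fq_zero hA hpythA hu hv 0]
    norm_num
  have hoB : ∀ u, u ∈ B → ∀ v, v ∈ Bbar → (inner ℝ u v : ℝ) = 0 := by
    intro u hu v hv
    show Fq u v 0 / 2 = 0
    rw [Fq_zero hB hpythB hu hv 0]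
    norm_num
  have key1 : ∀ (x : C) (y : ↥A),
      (inner ℝ ((A.linearProjOfIsCompl Abar hA x : ↥A) : C) ((y : ↥A) : C) : ℝ)
        = inner ℝ x ((y : ↥A) : C) := by
    intro x y
    have h2 : ((A.linearProjOfIsCompl Abar hA x) : C) + (Abar.linearProjOfIsCompl A hA.symm x : C) = x :=
      Submodule.projection_add_projection_eq_self hA x
    have hmem : x - ((A.linearProjOfIsCompl Abar hA x : ↥A) : C) ∈ Abar := by
      have e : x - ((A.linearProjOfIsCompl Abar hA x : ↥A) : C)
          = ((Abar.linearProjOfIsCompl A hA.symm x : ↥Abar) : C) := sub_eq_of_eq_add' h2.symm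
      rw [e]; exact Subtype.coe_prop _
    have h0 : (inner ℝ (x - ((A.linearProjOfIsCompl Abar hA x : ↥A) : C)) ((y : ↥A) : C) : ℝ) = 0 := by
      rw [real_inner_comm]
      exact hoA _ y.2 _ hmem
    have h3 := inner_sub_left (𝕜 := ℝ) x ((A.linearProjOfIsCompl Abar hA x : ↥A) : C) ((y : ↥A) : C)
    rw [h0] at h3
    linarith [h3]
  have key2 : ∀ (u : C), u ∈ B → ∀ (y : ↥A),
      (inner ℝ u ((y : ↥A) : C) : ℝ)
        = inner ℝ u ((B.linearProjOfIsCompl Bbar hB ((y : ↥A) : C) : ↥B) : C) := by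
    intro u hu y
    have h2 : ((B.linearProjOfIsCompl Bbar hB ((y : ↥A) : C)) : C) + (Bbar.linearProjOfIsCompl B hB.symm ((y : ↥A) : C) : C) = ((y : ↥A) : C) :=
      Submodule.projection_add_projection_eq_self hB ((y : ↥A) : C)
    have hmem : ((y : ↥A) : C) - ((B.linearProjOfIsCompl Bbar hB ((y : ↥A) : C) : ↥B) : C) ∈ Bbar := by
      have e : ((y : ↥A) : C) - ((B.linearProjOfIsCompl Bbar hB ((y : ↥A) : C) : ↥B) : C)
          = ((Bbar.linearProjOfIsCompl B hB.symm ((y : ↥A) : C) : ↥Bbar) : C) :=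
        sub_eq_of_eq_add' h2.symm
      rw [e]; exact Subtype.coe_prop _
    have h0 : (inner ℝ u (((y : ↥A) : C) - ((B.linearProjOfIsCompl Bbar hB ((y : ↥A) : C) : ↥B) : C)) : ℝ) = 0 :=
      hoB _ hu _ hmem
    have h3 := inner_sub_right (𝕜 := ℝ) u ((y : ↥A) : C)
      ((B.linearProjOfIsCompl Bbar hB ((y : ↥A) : C) : ↥B) : C)
    rw [h0] at h3
    linarith [h3]
  set T : ↥A →ₗ[ℝ] ↥A :=
    (A.linearProjOfIsCompl Abar hA).comp
      (B.subtype.comp ((B.linearProjOfIsCompl Bbar hB).comp A.subtype)) with hT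
  have he : ∀ w w' : ↥A, (inner ℝ (T w) w' : ℝ)
      = inner ℝ ((B.linearProjOfIsCompl Bbar hB ((w : ↥A) : C) : ↥B) : C)
        ((B.linearProjOfIsCompl Bbar hB ((w' : ↥A) : C) : ↥B) : C) := by
    intro w w'
    rw [Submodule.coe_inner]
    have hTw : ((T w : ↥A) : C)
        = ((A.linearProjOfIsCompl Abar hA
            ((B.linearProjOfIsCompl Bbar hB ((w : ↥A) : C) : ↥B) : C) : ↥A) : C) := rfl
    rw [hTw, key1, key2 _ (Subtype.coe_prop _) w']
  have hsym : T.IsSymmetric := by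
    intro w w'
    calc (inner ℝ (T w) w' : ℝ)
        = inner ℝ ((B.linearProjOfIsCompl Bbar hB ((w : ↥A) : C) : ↥B) : C)
            ((B.linearProjOfIsCompl Bbar hB ((w' : ↥A) : C) : ↥B) : C) := he w w'
      _ = inner ℝ ((B.linearProjOfIsCompl Bbar hB ((w' : ↥A) : C) : ↥B) : C)
            ((B.linearProjOfIsCompl Bbar hB ((w : ↥A) : C) : ↥B) : C) := real_inner_comm _ _
      _ = inner ℝ (T w') w := (he w' w).symm
      _ = inner ℝ w (T w') := real_inner_comm _ _
  have hev : Module.End.HasEigenvalue T _ := hsym.hasEigenvalue_iSup_of_finiteDimensional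
  obtain ⟨mu, a, haev⟩ : ∃ (mu : ℝ) (a : ↥A), Module.End.HasEigenvector T mu a :=
    ⟨_, hev.exists_hasEigenvector⟩
  refine ⟨a, mu, haev.right, ?_⟩
  have happ := haev.apply_eq_smul
  rw [hT] at happ
  simpa using happ
end

section
/- Let C be a real Banach space of finite dimension with two decompositions as a direct product of linear subspaces, A × Ā = C = B × B̄, such that A ∩ B = A ∩ B̄ = Ā ∩ B = Ā ∩ B̄ = {0}. Let P^A : B → A be the restriction to B of the linear projection of C onto A with kernel Ā, let P^B : A → B be the restriction to A of the linear projection of C onto B with kernel B̄, and set Q = P^A ∘ P^B : A → A. If Q is a multiple of the identity, Q = λ·Id_A for some real λ, then C is a Euclidean space, i.e. its norm is induced by an inner product. -/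
set_option maxHeartbeats 1000000


/-- **Lemma 7.3**: let `C` be a finite-dimensional real Banach space with two
decompositions as a direct product of linear subspaces, `A × Ā = C = B × B̄`
(i.e. `C = A ⊕ Ā` with `‖a + ā‖² = ‖a‖² + ‖ā‖²`, and likewise for `B, B̄`), such that
`A ∩ B = A ∩ B̄ = Ā ∩ B = Ā ∩ B̄ = {0}`. Let `P^A : B → A` and `P^B : A → B` be the
restrictions of the linear projections of `C` onto `A` with kernel `Ā` and onto `B`
with kernel `B̄`, and set `Q = P^A ∘ P^B : A → A`. If `Q = λ • Id_A` for some real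
`λ`, then `C` is a Euclidean space, i.e. its norm is induced by an inner product. -/
theorem euclidean_of_projection_composition_homothety {C : Type*} [NormedAddCommGroup C]
    [NormedSpace ℝ C] [FiniteDimensional ℝ C]
    (A Abar B Bbar : Submodule ℝ C)
    (hA : IsCompl A Abar) (hB : IsCompl B Bbar)
    (hpythA : ∀ a ∈ A, ∀ abar ∈ Abar, ‖a + abar‖ ^ 2 = ‖a‖ ^ 2 + ‖abar‖ ^ 2)
    (hpythB : ∀ b ∈ B, ∀ bbar ∈ Bbar, ‖b + bbar‖ ^ 2 = ‖b‖ ^ 2 + ‖bbar‖ ^ 2)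
    (hAB : A ⊓ B = ⊥) (hABbar : A ⊓ Bbar = ⊥)
    (hAbarB : Abar ⊓ B = ⊥) (hAbarBbar : Abar ⊓ Bbar = ⊥)
    (lam : ℝ)
    (hQ : ∀ a : A,
      A.linearProjOfIsCompl Abar hA ↑(B.linearProjOfIsCompl Bbar hB ↑a) = lam • a) :
    Nonempty (InnerProductSpace ℝ C) := by
  -- It suffices to prove the parallelogram law.
  suffices hpar2 : ∀ x y : C, ‖x + y‖ ^ 2 + ‖x - y‖ ^ 2 = 2 * ‖x‖ ^ 2 + 2 * ‖y‖ ^ 2 by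
    have hpar : ∀ x y : C,
        ‖x + y‖ * ‖x + y‖ + ‖x - y‖ * ‖x - y‖ = 2 * (‖x‖ * ‖x‖ + ‖y‖ * ‖y‖) := by
      intro x y
      have := hpar2 x y
      nlinarith [this]
    exact ⟨InnerProductSpace.ofNorm ℝ hpar⟩
  by_cases hbot : A = ⊥
  · -- Degenerate case: `C` is trivial.
    have hAbarTop : Abar = ⊤ := by
      have h := hA.sup_eq_top
      rwa [hbot, bot_sup_eq] at h
    have hBbot : B = ⊥ := by rwa [hAbarTop, top_inf_eq] at hAbarB
    have hBbarTop : Bbar = ⊤ := by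
      have h := hB.sup_eq_top
      rwa [hBbot, bot_sup_eq] at h
    have htriv : ∀ x : C, x = 0 := by
      intro x
      have hx : x ∈ Abar ⊓ Bbar := by
        rw [hAbarTop, hBbarTop]
        exact ⟨Submodule.mem_top, Submodule.mem_top⟩
      rw [hAbarBbar] at hx
      exact (Submodule.mem_bot ℝ).mp hx
    intro x y
    rw [htriv x, htriv y]
    simp
  · obtain ⟨a0, ha0A, ha0ne⟩ := Submodule.ne_bot_iff A |>.mp hbot
    set P := A.linearProjOfIsCompl Abar hA with hPdef
    set R := B.linearProjOfIsCompl Bbar hB with hRdef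
    -- The `Ā`-component map on `A`:  `S a = R a - lam • a`.
    set Slin : C →ₗ[ℝ] C := (B.subtype ∘ₗ R) - lam • LinearMap.id with hSdef
    have hSapp : ∀ x : C, Slin x = ↑(R x) - lam • x := fun x => rfl
    clear_value Slin
    -- basic membership facts
    have hAbarmem : ∀ x : C, x - ↑(P x) ∈ Abar := by
      intro x
      have h0 : P (x - ↑(P x)) = 0 := by
        rw [map_sub]
        rw [show P ↑(P x) = P x from Submodule.linearProjOfIsCompl_apply_left hA (P x), sub_self]
      exact (Submodule.linearProjOfIsCompl_apply_eq_zero_iff hA).mp h0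
    have hBbarmem : ∀ x : C, x - ↑(R x) ∈ Bbar := by
      intro x
      have h0 : R (x - ↑(R x)) = 0 := by
        rw [map_sub]
        rw [show R ↑(R x) = R x from Submodule.linearProjOfIsCompl_apply_left hB (R x), sub_self]
      exact (Submodule.linearProjOfIsCompl_apply_eq_zero_iff hB).mp h0
    have hQ' : ∀ a : C, a ∈ A → (↑(P ↑(R a)) : C) = lam • a := by
      intro a ha
      have h := hQ ⟨a, ha⟩
      have := congrArg (Submodule.subtype A) h
      simpa using this
    have hSmem : ∀ a : C, a ∈ A → Slin a ∈ Abar := by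
      intro a ha
      have h0 : P (Slin a) = 0 := by
        rw [hSapp, map_sub, map_smul]
        have h1 : P ↑(R a) = lam • (⟨a, ha⟩ : A) := by
          apply Subtype.coe_injective
          simpa using hQ' a ha
        have h2 : P a = (⟨a, ha⟩ : A) := Submodule.linearProjOfIsCompl_apply_left hA ⟨a, ha⟩
        rw [h1, h2]
        simp
      exact (Submodule.linearProjOfIsCompl_apply_eq_zero_iff hA).mp h0
    -- the three norm computations
    have hSnorm : ∀ a : C, a ∈ A →
        ‖Slin a‖ ^ 2 = lam * (1 - lam) * ‖a‖ ^ 2 ∧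
        ‖(↑(R a) : C)‖ ^ 2 = lam * ‖a‖ ^ 2 ∧
        ‖a - ↑(R a)‖ ^ 2 = (1 - lam) * ‖a‖ ^ 2 := by
      intro a ha
      have e1 : ‖a‖ ^ 2 = ‖(↑(R a) : C)‖ ^ 2 + ‖a - ↑(R a)‖ ^ 2 := by
        have h := hpythB (↑(R a)) (R a).2 (a - ↑(R a)) (hBbarmem a)
        rw [show (↑(R a) : C) + (a - ↑(R a)) = a by abel] at h
        exact h
      have e2 : ‖(↑(R a) : C)‖ ^ 2 = lam ^ 2 * ‖a‖ ^ 2 + ‖Slin a‖ ^ 2 := by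
        have h := hpythA (lam • a) (A.smul_mem lam ha) (Slin a) (hSmem a ha)
        rw [show lam • a + Slin a = (↑(R a) : C) by rw [hSapp]; abel] at h
        rw [h, norm_smul]
        simp [mul_pow, sq_abs]
      have e3 : ‖a - ↑(R a)‖ ^ 2 = (1 - lam) ^ 2 * ‖a‖ ^ 2 + ‖Slin a‖ ^ 2 := by
        have h := hpythA ((1 - lam) • a) (A.smul_mem (1 - lam) ha) (-(Slin a))
          (Abar.neg_mem (hSmem a ha))
        rw [show (1 - lam) • a + -(Slin a) = a - ↑(R a) by
          rw [hSapp, sub_smul, one_smul]; abel] at h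
        rw [h, norm_smul, norm_neg]
        simp [mul_pow, sq_abs]
      refine ⟨?_, ?_, ?_⟩
      · linear_combination (- e1 - e2 - e3) / 2
      · linear_combination (- e1 + e2 - e3) / 2
      · linear_combination (- e1 - e2 + e3) / 2
    -- lam * (1 - lam) > 0
    have hmul : 0 < lam * (1 - lam) := by
      have hs0 : Slin a0 ≠ 0 := by
        intro h
        have hR0 : (↑(R a0) : C) = lam • a0 := by
          have := hSapp a0
          rw [h] at this
          linear_combination (norm := module) - this
        have hRA : (↑(R a0) : C) ∈ A ⊓ B := by
          constructor
          · rw [hR0]; exact A.smul_mem lam ha0A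
          · exact (R a0).2
        rw [hAB] at hRA
        have hR00 : (↑(R a0) : C) = 0 := (Submodule.mem_bot ℝ).mp hRA
        have ha0B : a0 ∈ Bbar := by
          have := hBbarmem a0
          rwa [hR00, sub_zero] at this
        have : a0 ∈ A ⊓ Bbar := ⟨ha0A, ha0B⟩
        rw [hABbar] at this
        exact ha0ne ((Submodule.mem_bot ℝ).mp this)
      have h1 : 0 < ‖Slin a0‖ ^ 2 := pow_pos (norm_pos_iff.mpr hs0) 2
      have h2 : 0 < ‖a0‖ ^ 2 := pow_pos (norm_pos_iff.mpr ha0ne) 2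
      have h3 := (hSnorm a0 ha0A).1
      nlinarith
    have hlam0 : lam ≠ 0 := by
      intro h; rw [h] at hmul; simp at hmul
    have hlam1 : (1 : ℝ) - lam ≠ 0 := by
      intro h; rw [h] at hmul; simp at hmul
    -- key identity on A
    have hkey : ∀ u ∈ A, ∀ v ∈ A,
        ‖lam • u + (1 - lam) • v‖ ^ 2 + lam * (1 - lam) * ‖u - v‖ ^ 2
          = lam * ‖u‖ ^ 2 + (1 - lam) * ‖v‖ ^ 2 := by
      intro u hu v hv
      have h1 := hpythB (↑(R u)) (R u).2 (v - ↑(R v)) (hBbarmem v)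
      have h2 := hpythA (lam • u + (1 - lam) • v)
        (A.add_mem (A.smul_mem lam hu) (A.smul_mem (1 - lam) hv))
        (Slin (u - v)) (hSmem (u - v) (A.sub_mem hu hv))
      have heq : (↑(R u) : C) + (v - ↑(R v)) =
          (lam • u + (1 - lam) • v) + Slin (u - v) := by
        rw [hSapp, map_sub]
        push_cast
        module
      rw [heq] at h1
      rw [h2] at h1
      have hs := (hSnorm (u - v) (A.sub_mem hu hv)).1
      have hru := (hSnorm u hu).2.1
      have hrv := (hSnorm v hv).2.2
      linarith
    -- parallelogram law on A via the functional equation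
    have hparA : ∀ u ∈ A, ∀ v ∈ A,
        ‖u + v‖ ^ 2 + ‖u - v‖ ^ 2 = 2 * ‖u‖ ^ 2 + 2 * ‖v‖ ^ 2 := by
      intro u hu v hv
      set g : ℝ → ℝ := fun r => ‖u + r • v‖ ^ 2 - r ^ 2 * ‖v‖ ^ 2 - ‖u‖ ^ 2 with hg
      have hJ : ∀ s t : ℝ, g (lam * s + (1 - lam) * t) = lam * g s + (1 - lam) * g t := by
        intro s t
        have h1 := hkey (u + s • v) (A.add_mem hu (A.smul_mem s hv))
          (u + t • v) (A.add_mem hu (A.smul_mem t hv))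
        rw [show lam • (u + s • v) + (1 - lam) • (u + t • v)
            = u + (lam * s + (1 - lam) * t) • v by module] at h1
        rw [show (u + s • v) - (u + t • v) = (s - t) • v by module] at h1
        rw [norm_smul] at h1
        rw [Real.norm_eq_abs, mul_pow, sq_abs] at h1
        simp only [hg]
        linear_combination h1
      have hg0 : g 0 = 0 := by simp [hg]
      have hadd : ∀ x y : ℝ, g (x + y) = g x + g y := by
        intro x y
        have hx : lam * (x / lam) = x := by field_simp
        have hy : (1 - lam) * (y / (1 - lam)) = y := by field_simp
        have h1 := hJ (x / lam) 0
        have h2 := hJ 0 (y / (1 - lam))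
        have h3 := hJ (x / lam) (y / (1 - lam))
        rw [hx] at h1 h3
        rw [hy] at h2 h3
        rw [mul_zero, add_zero, hg0] at h1
        rw [mul_zero, zero_add, hg0] at h2
        rw [h3]
        linarith
      have hcont : Continuous g := by
        have c1 : Continuous fun r : ℝ => u + r • v :=
          continuous_const.add (continuous_id.smul continuous_const)
        have c2 : Continuous fun r : ℝ => ‖u + r • v‖ ^ 2 := (c1.norm).pow 2
        exact (c2.sub ((continuous_pow 2).mul continuous_const)).sub continuous_const
      have hlin : ∀ r : ℝ, g r = r * g 1 := by
        intro r
        set L := (AddMonoidHom.mk' g hadd).toRealLinearMap hcont with hL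
        have hcoe : ⇑L = g := AddMonoidHom.coe_toRealLinearMap _ hcont
        have h := L.map_smul r (1 : ℝ)
        rw [smul_eq_mul, mul_one, smul_eq_mul] at h
        rw [← hcoe]
        exact h.trans (by rw [hcoe])
      have hp := hlin (-1)
      have e1 : u + (1 : ℝ) • v = u + v := by module
      have e2 : u + (-1 : ℝ) • v = u - v := by module
      simp only [hg, e1, e2] at hp
      norm_num at hp
      linarith
    -- dimension count: finrank A = finrank Abar
    have hle : ∀ p q : Submodule ℝ C, p ⊓ q = ⊥ →
        Module.finrank ℝ p + Module.finrank ℝ q ≤ Module.finrank ℝ C := by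
      intro p q h
      have h1 := Submodule.finrank_sup_add_finrank_inf_eq p q
      rw [h, finrank_bot, add_zero] at h1
      rw [← h1]
      exact Submodule.finrank_le _
    have c1 := Submodule.finrank_add_eq_of_isCompl hA
    have c2 := Submodule.finrank_add_eq_of_isCompl hB
    have d1 := hle A B hAB
    have d2 := hle A Bbar hABbar
    have d3 := hle Abar B hAbarB
    have d4 := hle Abar Bbar hAbarBbar
    have hfr : Module.finrank ℝ A = Module.finrank ℝ Abar := by omega
    -- S : A → Abar is surjective
    set T : A →ₗ[ℝ] C := Slin ∘ₗ A.subtype with hT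
    have hTapp : ∀ x : A, T x = Slin ↑x := fun x => rfl
    clear_value T
    have hker : LinearMap.ker T = ⊥ := by
      rw [LinearMap.ker_eq_bot']
      intro m hm
      have hm' : Slin ↑m = 0 := by rw [← hTapp]; exact hm
      have hR0 : (↑(R ↑m) : C) = lam • (↑m : C) := by
        have := hSapp (↑m : C)
        rw [hm'] at this
        linear_combination (norm := module) - this
      have hRA : (↑(R ↑m) : C) ∈ A ⊓ B := by
        constructor
        · rw [hR0]; exact A.smul_mem lam m.2
        · exact (R ↑m).2
      rw [hAB] at hRA
      have hR00 : (↑(R ↑m) : C) = 0 := (Submodule.mem_bot ℝ).mp hRA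
      have hmB : (↑m : C) ∈ Bbar := by
        have := hBbarmem ↑m
        rwa [hR00, sub_zero] at this
      have : (↑m : C) ∈ A ⊓ Bbar := ⟨m.2, hmB⟩
      rw [hABbar] at this
      exact Subtype.coe_injective ((Submodule.mem_bot ℝ).mp this)
    have hrange : LinearMap.range T = Abar := by
      apply Submodule.eq_of_le_of_finrank_le
      · rintro w ⟨x, rfl⟩
        rw [hTapp]
        exact hSmem ↑x x.2
      · have h1 := LinearMap.finrank_range_add_finrank_ker T
        rw [hker, finrank_bot, add_zero] at h1
        rw [h1, ← hfr]
    have hsurj : ∀ w ∈ Abar, ∃ a ∈ A, Slin a = w := by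
      intro w hw
      rw [← hrange] at hw
      obtain ⟨x, hx⟩ := hw
      exact ⟨↑x, x.2, by rw [← hTapp]; exact hx⟩
    -- parallelogram law on Abar
    have hparAbar : ∀ w ∈ Abar, ∀ w' ∈ Abar,
        ‖w + w'‖ ^ 2 + ‖w - w'‖ ^ 2 = 2 * ‖w‖ ^ 2 + 2 * ‖w'‖ ^ 2 := by
      intro w hw w' hw'
      obtain ⟨a, haA, haw⟩ := hsurj w hw
      obtain ⟨a', haA', haw'⟩ := hsurj w' hw'
      have k1 : ‖w + w'‖ ^ 2 = lam * (1 - lam) * ‖a + a'‖ ^ 2 := by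
        rw [← haw, ← haw', ← map_add]
        exact (hSnorm _ (A.add_mem haA haA')).1
      have k2 : ‖w - w'‖ ^ 2 = lam * (1 - lam) * ‖a - a'‖ ^ 2 := by
        rw [← haw, ← haw', ← map_sub]
        exact (hSnorm _ (A.sub_mem haA haA')).1
      have k3 : ‖w‖ ^ 2 = lam * (1 - lam) * ‖a‖ ^ 2 := by
        rw [← haw]; exact (hSnorm _ haA).1
      have k4 : ‖w'‖ ^ 2 = lam * (1 - lam) * ‖a'‖ ^ 2 := by
        rw [← haw']; exact (hSnorm _ haA').1
      have hp := hparA a haA a' haA'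
      linear_combination k1 + k2 - 2 * k3 - 2 * k4 + lam * (1 - lam) * hp
    -- parallelogram law on C
    intro x y
    have exy : ‖x + y‖ ^ 2 =
        ‖(↑(P x) : C) + ↑(P y)‖ ^ 2 + ‖(x - ↑(P x)) + (y - ↑(P y))‖ ^ 2 := by
      have h := hpythA ((↑(P x) : C) + ↑(P y)) (A.add_mem (P x).2 (P y).2)
        ((x - ↑(P x)) + (y - ↑(P y))) (Abar.add_mem (hAbarmem x) (hAbarmem y))
      rw [show ((↑(P x) : C) + ↑(P y)) + ((x - ↑(P x)) + (y - ↑(P y))) = x + y by abel] at h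
      exact h
    have exy' : ‖x - y‖ ^ 2 =
        ‖(↑(P x) : C) - ↑(P y)‖ ^ 2 + ‖(x - ↑(P x)) - (y - ↑(P y))‖ ^ 2 := by
      have h := hpythA ((↑(P x) : C) - ↑(P y)) (A.sub_mem (P x).2 (P y).2)
        ((x - ↑(P x)) - (y - ↑(P y))) (Abar.sub_mem (hAbarmem x) (hAbarmem y))
      rw [show ((↑(P x) : C) - ↑(P y)) + ((x - ↑(P x)) - (y - ↑(P y))) = x - y by abel] at h
      exact h
    have ex : ‖x‖ ^ 2 = ‖(↑(P x) : C)‖ ^ 2 + ‖x - ↑(P x)‖ ^ 2 := by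
      have h := hpythA (↑(P x)) (P x).2 (x - ↑(P x)) (hAbarmem x)
      rw [show (↑(P x) : C) + (x - ↑(P x)) = x by abel] at h
      exact h
    have ey : ‖y‖ ^ 2 = ‖(↑(P y) : C)‖ ^ 2 + ‖y - ↑(P y)‖ ^ 2 := by
      have h := hpythA (↑(P y)) (P y).2 (y - ↑(P y)) (hAbarmem y)
      rw [show (↑(P y) : C) + (y - ↑(P y)) = y by abel] at h
      exact h
    have hp1 := hparA (↑(P x)) (P x).2 (↑(P y)) (P y).2
    have hp2 := hparAbar (x - ↑(P x)) (hAbarmem x) (y - ↑(P y)) (hAbarmem y)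
    linarith
end
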